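/- arXiv:2008.06022 — 7 statements merged into one kernel-verified Lean document; each statement's English description precedes it below -/
import Mathlib

section
/- Let k ≥ 1 be an integer, λ > 0, and a ≥ 0. Then for every real u, exp(-kλa(1 - (1/k)∑_{j=1}^k u^j)) = ∑_{n=0}^∞ u^n · e^{-kλa} · c_k(n, λa). In particular, the probability mass function of the homogeneous Poisson field of order k evaluated on a Borel set A of measure a is P(X^k(A) = n) = e^{-kλa} c_k(n, λa). -/
open scoped BigOperators

/-- `Omega k n` is the (finite) set of tuples `(x₁,…,x_k)` of non-negative integers with
`x₁ + 2·x₂ + ⋯ + k·x_k = n`. -/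
def Omega (k n : ℕ) : Finset (Fin k → ℕ) :=
  (Fintype.piFinset fun _ => Finset.range (n + 1)).filter
    (fun x => ∑ i, (i.1 + 1) * x i = n)

/-- `ζ(x) = x₁ + ⋯ + x_k`. -/
def zeta {k : ℕ} (x : Fin k → ℕ) : ℕ := ∑ i, x i

/-- `Π!(x) = x₁! ⋯ x_k!`. -/
def pifact {k : ℕ} (x : Fin k → ℕ) : ℕ := ∏ i, (x i).factorial

/-- `c_k(n, y) = ∑_{x ∈ Ω(k,n)} y^{ζ(x)} / Π!(x)`. -/
noncomputable def ck (k n : ℕ) (y : ℝ) : ℝ :=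
  ∑ x ∈ Omega k n, y ^ zeta x / (pifact x : ℝ)

/-!
Write `t = λa`. The left side is `e^{-kt} ∏_{j=1}^k exp(t uʲ)`. Expanding every factor as an
exponential series and multiplying out the `k` absolutely convergent series gives a series over
tuples `x : Fin k → ℕ` whose term is `u^{∑ j xⱼ} t^{ζ(x)} / Π!(x)`; grouping the tuples by their
weight `∑ j xⱼ = n` collects exactly the coefficient `c_k(n, t)` of `uⁿ`.
-/

open Finset

theorem prod_fin_cons_apply {M β : Type*} [CommMonoid M] {k : ℕ} (f : Fin (k + 1) → β → M)
    (b : β) (y : Fin k → β) :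
    ∏ i, f i ((Fin.cons b y : Fin (k + 1) → β) i) = f 0 b * ∏ i, f i.succ (y i) := by
  simp [Fin.prod_univ_succ]

section ProdTsum

variable {R β : Type*} [NormedCommRing R]

theorem summable_norm_prod_pi {k : ℕ} (f : Fin k → β → R)
    (hf : ∀ i, Summable fun b => ‖f i b‖) :
    Summable fun x : Fin k → β => ‖∏ i, f i (x i)‖ := by
  induction k with
  | zero => exact Summable.of_finite
  | succ k ih =>
    have hsplit := (hf 0).mul_norm (ih (fun i => f i.succ) fun i => hf i.succ)
    rw [← (Fin.consEquiv fun _ => β).summable_iff]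
    simpa [Function.comp_def, prod_fin_cons_apply] using hsplit

variable [CompleteSpace R]

theorem prod_tsum_eq_tsum_prod_pi {k : ℕ} (f : Fin k → β → R)
    (hf : ∀ i, Summable fun b => ‖f i b‖) :
    ∏ i, ∑' b, f i b = ∑' x : Fin k → β, ∏ i, f i (x i) := by
  induction k with
  | zero => simp
  | succ k ih =>
    rw [Fin.prod_univ_succ, ih _ fun i => hf i.succ,
      tsum_mul_tsum_of_summable_norm (hf 0) (summable_norm_prod_pi _ fun i => hf i.succ),
      ← (Fin.consEquiv fun _ => β).tsum_eq]
    simp [prod_fin_cons_apply]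

theorem hasSum_prod_pi {k : ℕ} (f : Fin k → β → R) (hf : ∀ i, Summable fun b => ‖f i b‖) :
    HasSum (fun x : Fin k → β => ∏ i, f i (x i)) (∏ i, ∑' b, f i b) := by
  rw [prod_tsum_eq_tsum_prod_pi f hf]
  exact (summable_norm_prod_pi f hf).of_norm.hasSum

end ProdTsum

section Omega

theorem mem_Omega {k n : ℕ} {x : Fin k → ℕ} : x ∈ Omega k n ↔ ∑ i, (i.1 + 1) * x i = n := by
  refine mem_filter.trans (and_iff_right_of_imp fun hx => ?_)
  refine Fintype.mem_piFinset.mpr fun i => mem_range_succ_iff.mpr ?_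
  calc x i ≤ (i.1 + 1) * x i := Nat.le_mul_of_pos_left _ i.1.succ_pos
    _ ≤ ∑ j, (j.1 + 1) * x j :=
      single_le_sum (f := fun j : Fin k => (j.1 + 1) * x j) (by simp) (mem_univ i)
    _ = n := hx

theorem coe_Omega (k n : ℕ) :
    (Omega k n : Set (Fin k → ℕ)) = (fun x => ∑ i, (i.1 + 1) * x i) ⁻¹' {n} := by
  ext x
  exact mem_Omega

theorem HasSum.sum_Omega {α : Type*} [AddCommGroup α] [UniformSpace α] [IsUniformAddGroup α]
    [CompleteSpace α] [T2Space α] {k : ℕ} {f : (Fin k → ℕ) → α} {a : α} (hf : HasSum f a) :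
    HasSum (fun n => ∑ x ∈ Omega k n, f x) a := by
  convert hf.tsum_fiberwise fun x => ∑ i, (i.1 + 1) * x i with n
  rw [← coe_Omega, tsum_subtype']

theorem prod_pow_div_factorial_of_mem_Omega {k n : ℕ} {x : Fin k → ℕ} (hx : x ∈ Omega k n)
    (t u : ℝ) :
    ∏ i, (t * u ^ (i.1 + 1)) ^ x i / ((x i).factorial : ℝ) = u ^ n * (t ^ zeta x / pifact x) := by
  rw [← mem_Omega.mp hx, zeta, pifact]
  simp only [mul_pow, ← pow_mul, prod_div_distrib, prod_mul_distrib, prod_pow_eq_pow_sum,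
    Nat.cast_prod]
  ring

end Omega

theorem hasSum_pow_mul_ck (k : ℕ) (t u : ℝ) :
    HasSum (fun n => u ^ n * ck k n t) (Real.exp (t * ∑ j ∈ range k, u ^ (j + 1))) := by
  have hexp : Real.exp (t * ∑ j ∈ range k, u ^ (j + 1)) =
      ∏ i : Fin k, ∑' m, (t * u ^ (i.1 + 1)) ^ m / (m.factorial : ℝ) := by
    rw [mul_sum, Real.exp_sum, prod_range fun j => Real.exp (t * u ^ (j + 1))]
    simp only [Real.exp_eq_exp_ℝ, NormedSpace.exp_eq_tsum_div]
  have hsummable (i : Fin k) :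
      Summable fun m => ‖(t * u ^ (i.1 + 1)) ^ m / (m.factorial : ℝ)‖ := by
    simpa [abs_div] using Real.summable_pow_div_factorial |t * u ^ (i.1 + 1)|
  rw [hexp]
  refine (hasSum_prod_pi _ hsummable).sum_Omega.congr_fun fun n => ?_
  rw [ck, mul_sum]
  exact sum_congr rfl fun x hx => (prod_pow_div_factorial_of_mem_Omega hx t u).symm

theorem pgf_homogeneous_poisson_field_of_order_k_general
    (k : ℕ) (lam a : ℝ) (u : ℝ) :
    Real.exp (-(k * lam * a) * (1 - (1 / k) * ∑ j ∈ Finset.range k, u ^ (j + 1))) =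
      ∑' n : ℕ, u ^ n * Real.exp (-(k * lam * a)) * ck k n (lam * a) := by
  have hexponent : -(k * lam * a) * (1 - (1 / k) * ∑ j ∈ range k, u ^ (j + 1)) =
      -(k * lam * a) + lam * a * ∑ j ∈ range k, u ^ (j + 1) := by
    rcases k.eq_zero_or_pos with rfl | hk
    · simp
    · field_simp
      ring
  rw [hexponent, Real.exp_add, ← (hasSum_pow_mul_ck k (lam * a) u).tsum_eq, ← tsum_mul_left]
  exact tsum_congr fun n => by ring

/-- The generating-function identity for the pmf of the homogeneous Poisson field of
order `k`: for every real `u`,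
`exp(-kλa(1 - (1/k)∑_{j=1}^k u^j)) = ∑_{n=0}^∞ uⁿ e^{-kλa} c_k(n, λa)`. -/
theorem pgf_homogeneous_poisson_field_of_order_k
    (k : ℕ) (hk : 1 ≤ k) (lam a : ℝ) (hlam : 0 < lam) (ha : 0 ≤ a) (u : ℝ) :
    Real.exp (-(k * lam * a) * (1 - (1 / k) * ∑ j ∈ Finset.range k, u ^ (j + 1))) =
      ∑' n : ℕ, u ^ n * Real.exp (-(k * lam * a)) * ck k n (lam * a) :=
  pgf_homogeneous_poisson_field_of_order_k_general k lam a u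
end

section
/- Let k ≥ 1 be an integer, λ > 0, α ∈ (0,1), t ≥ 0, and n ≥ 0. Then ∑_{r=0}^∞ ((−(kλ)^α t)^r / r!) · ∑_{x ∈ Ω(k,n)} (−1)^{ζ(x)} (∏_{l=0}^{ζ(x)−1}(αr − l)) / (Π!(x) · k^{ζ(x)}) = ∑_{x ∈ Ω(k,n)} ((−1)^{ζ(x)} / (Π!(x) · k^{ζ(x)})) · (d^{ζ(x)}/du^{ζ(x)}) exp(−t k^α λ^α u^α) |_{u=1}; that is, the probability mass function of the space-fractional Poisson process of order k can be written via derivatives of u ↦ exp(−t k^α λ^α u^α) at u = 1. -/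
open scoped BigOperators

/-!
Expanding `exp (-c u^α) = ∑ (-c)^r u^{αr} / r!` and differentiating term by term, the `m`-th
derivative at `u = 1` is `∑ (-c)^r / r! · ∏_{l<m} (αr - l)`. Termwise differentiation is legitimate
on `(1/2, 2)`: for any natural `a ≥ |α|` the `m`-th derivative of the `r`-th term is bounded there
by `m! 4^m (4^a |c|)^r / r!`, a summable bound. With `c = t k^α λ^α`, the theorem is a finite linear
combination of these identities, and the finite sum commutes with the series.
-/

open Finset Real
open scoped Nat

lemma abs_prod_range_mul_sub_le {α : ℝ} {a : ℕ} (hα : |α| ≤ a) (m r : ℕ) :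
    |∏ l ∈ range m, (α * r - l)| ≤ m ! * 2 ^ (a * r + m) := by
  calc |∏ l ∈ range m, (α * r - l)| ≤ ∏ l ∈ range m, (((a * r + 1 : ℕ) : ℝ) + l) := by
        rw [abs_prod]
        gcongr with l
        calc |α * r - l| ≤ |α| * r + l := by
              simpa [abs_mul] using abs_sub (α * r) (l : ℝ)
          _ ≤ _ := by push_cast; nlinarith [r.cast_nonneg (α := ℝ)]
    _ = m ! * (a * r + m).choose m := by
        have h := Nat.ascFactorial_eq_factorial_mul_choose (a * r) m
        rw [Nat.ascFactorial_eq_prod_range] at h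
        exact_mod_cast h
    _ ≤ m ! * 2 ^ (a * r + m) := by gcongr; exact_mod_cast Nat.choose_le_two_pow _ _

lemma rpow_le_two_pow_of_abs_le {u e : ℝ} {N : ℕ} (hu : u ∈ Set.Ioo (1 / 2 : ℝ) 2)
    (he : |e| ≤ N) : u ^ e ≤ 2 ^ N := by
  have hu0 : 0 < u := by linarith [hu.1]
  have hlog : |log u| ≤ log 2 := by
    refine abs_le.2 ⟨?_, log_le_log hu0 hu.2.le⟩
    rw [neg_le, ← log_inv]
    exact log_le_log (inv_pos.2 hu0) (by rw [inv_le_comm₀ hu0 two_pos]; linarith [hu.1])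
  calc u ^ e = exp (log u * e) := rpow_def_of_pos hu0 e
    _ ≤ exp (log 2 * N) := exp_le_exp.2 <| by
        calc log u * e ≤ |log u| * |e| := by rw [← abs_mul]; exact le_abs_self _
          _ ≤ log 2 * N := by gcongr
    _ = 2 ^ N := by rw [← rpow_def_of_pos two_pos, rpow_natCast]

namespace ExpNegMulRpow

variable (α c : ℝ)

/-- The `m`-th derivative of `u ↦ (-c)^r u^{αr} / r!`, the `r`-th term of the series of
`exp (-c u^α)`. -/
noncomputable def derivTerm (m r : ℕ) (u : ℝ) : ℝ :=
  (-c) ^ r / r ! * (∏ l ∈ range m, (α * r - l)) * u ^ (α * r - m)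

lemma derivTerm_one (m r : ℕ) :
    derivTerm α c m r 1 = (-c) ^ r / r ! * ∏ l ∈ range m, (α * r - l) := by
  rw [derivTerm, one_rpow, mul_one]

lemma hasDerivAt_derivTerm (m r : ℕ) {u : ℝ} (hu : u ≠ 0) :
    HasDerivAt (derivTerm α c m r) (derivTerm α c (m + 1) r u) u := by
  refine ((hasDerivAt_rpow_const (p := α * r - m) (.inl hu)).const_mul
    ((-c) ^ r / r ! * ∏ l ∈ range m, (α * r - l))).congr_deriv ?_
  rw [derivTerm, prod_range_succ, Nat.cast_succ, sub_add_eq_sub_sub]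
  ring

lemma norm_derivTerm_le {a : ℕ} (hα : |α| ≤ a) (m r : ℕ) {u : ℝ}
    (hu : u ∈ Set.Ioo (1 / 2 : ℝ) 2) :
    ‖derivTerm α c m r u‖ ≤ m ! * 4 ^ m * ((4 ^ a * |c|) ^ r / r !) := by
  have hpow : |u ^ (α * r - m)| ≤ 2 ^ (a * r + m) := by
    rw [abs_of_nonneg (rpow_nonneg (by linarith [hu.1]) _)]
    refine rpow_le_two_pow_of_abs_le hu ?_
    calc |α * r - m| ≤ |α| * r + m := by simpa [abs_mul] using abs_sub (α * r) (m : ℝ)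
      _ ≤ _ := by push_cast; nlinarith [r.cast_nonneg (α := ℝ)]
  calc ‖derivTerm α c m r u‖
      = |c| ^ r / r ! * |∏ l ∈ range m, (α * r - l)| * |u ^ (α * r - m)| := by
        rw [norm_eq_abs, derivTerm, abs_mul, abs_mul, abs_div, abs_pow, abs_neg, Nat.abs_cast]
    _ ≤ |c| ^ r / r ! * (m ! * 2 ^ (a * r + m)) * 2 ^ (a * r + m) := by
        gcongr
        exact abs_prod_range_mul_sub_le hα m r
    _ = m ! * 4 ^ m * ((4 ^ a * |c|) ^ r / r !) := by
        simp only [show (4 : ℝ) = 2 * 2 by norm_num, mul_pow, pow_add, pow_mul]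
        ring

lemma summable_derivTerm (m : ℕ) {u : ℝ} (hu : u ∈ Set.Ioo (1 / 2 : ℝ) 2) :
    Summable fun r ↦ derivTerm α c m r u :=
  .of_norm_bounded ((Real.summable_pow_div_factorial _).mul_left _)
    fun r ↦ norm_derivTerm_le α c (Nat.le_ceil |α|) m r hu

lemma hasDerivAt_tsum_derivTerm (m : ℕ) {u : ℝ} (hu : u ∈ Set.Ioo (1 / 2 : ℝ) 2) :
    HasDerivAt (fun v ↦ ∑' r, derivTerm α c m r v) (∑' r, derivTerm α c (m + 1) r u) u :=
  hasDerivAt_tsum_of_isPreconnected ((Real.summable_pow_div_factorial _).mul_left _) isOpen_Ioo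
    isPreconnected_Ioo
    (fun r _ hv ↦ hasDerivAt_derivTerm α c m r (by linarith [hv.1]))
    (fun r _ hv ↦ norm_derivTerm_le α c (Nat.le_ceil |α|) (m + 1) r hv)
    hu (summable_derivTerm α c m hu) hu

lemma iteratedDeriv_eqOn_tsum_derivTerm (m : ℕ) :
    Set.EqOn (iteratedDeriv m fun u ↦ exp (-c * u ^ α)) (fun u ↦ ∑' r, derivTerm α c m r u)
      (Set.Ioo (1 / 2) 2) := by
  induction m with
  | zero =>
    intro u hu
    rw [iteratedDeriv_zero, exp_eq_exp_ℝ, NormedSpace.exp_eq_tsum_div]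
    refine tsum_congr fun r ↦ ?_
    rw [derivTerm, mul_pow, ← rpow_natCast (u ^ α), ← rpow_mul (by linarith [hu.1])]
    simp [div_mul_eq_mul_div]
  | succ m ih =>
    intro u hu
    rw [iteratedDeriv_succ, (Filter.eventuallyEq_of_mem (isOpen_Ioo.mem_nhds hu) ih).deriv_eq]
    exact (hasDerivAt_tsum_derivTerm α c m hu).deriv

end ExpNegMulRpow

open ExpNegMulRpow in
theorem iteratedDeriv_exp_neg_mul_rpow_one (α c : ℝ) (m : ℕ) :
    iteratedDeriv m (fun u ↦ exp (-c * u ^ α)) 1 =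
      ∑' r : ℕ, (-c) ^ r / r ! * ∏ l ∈ range m, (α * r - l) := by
  simp only [iteratedDeriv_eqOn_tsum_derivTerm α c m (by norm_num : (1 : ℝ) ∈ Set.Ioo (1 / 2) 2),
    derivTerm_one]

open ExpNegMulRpow in
theorem summable_pow_div_factorial_mul_prod_range_mul_sub (α c : ℝ) (m : ℕ) :
    Summable fun r : ℕ ↦ (-c) ^ r / r ! * ∏ l ∈ range m, (α * r - l) := by
  simpa only [derivTerm_one] using
    summable_derivTerm α c m (by norm_num : (1 : ℝ) ∈ Set.Ioo (1 / 2) 2)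

theorem pmf_space_fractional_poisson_of_order_k_deriv_form_general
    (k : ℕ) (lam α t : ℝ) (hlam : 0 < lam) (n : ℕ) :
    (∑' r : ℕ, ((-((k * lam) ^ α) * t) ^ r / r.factorial) *
        ∑ x ∈ Omega k n,
          (-1 : ℝ) ^ zeta x * (∏ l ∈ Finset.range (zeta x), (α * r - l)) /
            ((pifact x : ℝ) * (k : ℝ) ^ zeta x)) =
      ∑ x ∈ Omega k n,
        ((-1 : ℝ) ^ zeta x / ((pifact x : ℝ) * (k : ℝ) ^ zeta x)) *
          iteratedDeriv (zeta x)
            (fun u : ℝ => Real.exp (-(t * (k : ℝ) ^ α * lam ^ α) * u ^ α)) 1 := by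
  set c := t * (k : ℝ) ^ α * lam ^ α
  have hbase : -(((k : ℝ) * lam) ^ α) * t = -c := by
    rw [mul_rpow k.cast_nonneg hlam.le]
    ring
  simp only [iteratedDeriv_exp_neg_mul_rpow_one, ← tsum_mul_left]
  rw [← Summable.tsum_finsetSum fun x _ ↦
    (summable_pow_div_factorial_mul_prod_range_mul_sub α c _).mul_left _]
  refine tsum_congr fun r ↦ ?_
  rw [hbase, mul_sum]
  exact sum_congr rfl fun x _ ↦ by ring

/-- Alternative form of the marginal pmf of the space-fractional Poisson process of
order `k`: the double series equals
`∑_{x ∈ Ω(k,n)} ((−1)^{ζ(x)} / (Π!(x) k^{ζ(x)})) (d^{ζ(x)}/du^{ζ(x)}) e^{−t k^α λ^α u^α}|_{u=1}`. -/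
theorem pmf_space_fractional_poisson_of_order_k_deriv_form
    (k : ℕ) (hk : 1 ≤ k) (lam α t : ℝ) (hlam : 0 < lam) (hα : α ∈ Set.Ioo (0 : ℝ) 1)
    (ht : 0 ≤ t) (n : ℕ) :
    (∑' r : ℕ, ((-((k * lam) ^ α) * t) ^ r / r.factorial) *
        ∑ x ∈ Omega k n,
          (-1 : ℝ) ^ zeta x * (∏ l ∈ Finset.range (zeta x), (α * r - l)) /
            ((pifact x : ℝ) * (k : ℝ) ^ zeta x)) =
      ∑ x ∈ Omega k n,
        ((-1 : ℝ) ^ zeta x / ((pifact x : ℝ) * (k : ℝ) ^ zeta x)) *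
          iteratedDeriv (zeta x)
            (fun u : ℝ => Real.exp (-(t * (k : ℝ) ^ α * lam ^ α) * u ^ α)) 1 :=
  pmf_space_fractional_poisson_of_order_k_deriv_form_general k lam α t hlam n
end

section
/- Let k ≥ 1 be an integer, λ > 0, α ∈ (0,1), and let q_{α,k}(n,t) = ∑_{x ∈ Ω(k,n)} ((−1)^{ζ(x)} / (Π!(x) · k^{ζ(x)})) · (d^{ζ(x)}/du^{ζ(x)}) exp(−t k^α λ^α u^α)|_{u=1} be the probability mass function of the space-fractional Poisson process of order k. Then for every t > 0, (d/dt)[1 − q_{α,k}(0,t) − q_{α,k}(1,t)] = λ^α e^{−t k^α λ^α} (k^α − α k^{α−1} + α λ^α t k^{2α−1}); that is, the first passage time T₂ = inf{t ≥ 0 : R_α^k(t) = 2} of the space-fractional Poisson process of order k at level 2 has density λ^α e^{−t k^α λ^α}(k^α − α k^{α−1} + α λ^α t k^{2α−1}), which is not a gamma (Erlang) density. -/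
open scoped BigOperators

/-- The pmf of the space-fractional Poisson process of order `k` (derivative form):
`q_{α,k}(n,t) = ∑_{x ∈ Ω(k,n)} ((−1)^{ζ(x)} / (Π!(x) k^{ζ(x)}))
(d^{ζ(x)}/du^{ζ(x)}) e^{−t k^α λ^α u^α}|_{u=1}`. -/
noncomputable def qkd (k : ℕ) (lam α : ℝ) (n : ℕ) (t : ℝ) : ℝ :=
  ∑ x ∈ Omega k n,
    ((-1 : ℝ) ^ zeta x / ((pifact x : ℝ) * (k : ℝ) ^ zeta x)) *
      iteratedDeriv (zeta x)
        (fun u : ℝ => Real.exp (-(t * (k : ℝ) ^ α * lam ^ α) * u ^ α)) 1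

/-
Only the tuples `0 ∈ Ω(k,0)` and `e₁ = (1,0,…,0) ∈ Ω(k,1)` contribute, so
`q(0,t) = e^{-ct}` and `q(1,t) = (α/k) c t e^{-ct}` with `c = k^α λ^α`, the latter because
`(d/du) e^{-ct u^α}|_{u=1} = -α c t e^{-ct}`. Differentiating `1 - e^{-ct} - b t e^{-ct}` gives
`e^{-ct} (c - b + b c t)`, and `k^{α-1} k^α = k^{2α-1}` puts this in the stated form.
-/

open Real

lemma Omega_zero (k : ℕ) : Omega k 0 = {0} := by
  ext x
  simp only [Omega, Finset.mem_filter, Fintype.mem_piFinset, Finset.mem_range,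
    Finset.mem_singleton, Finset.sum_eq_zero_iff, Finset.mem_univ, true_implies,
    Nat.mul_eq_zero, Nat.add_one_ne_zero, false_or, funext_iff, Pi.zero_apply]
  exact and_iff_right_of_imp fun h i => by simp [h i]

lemma Omega_one (k : ℕ) [NeZero k] : Omega k 1 = {Pi.single 0 1} := by
  ext x
  simp only [Omega, Finset.mem_filter, Fintype.mem_piFinset, Finset.mem_range,
    Finset.mem_singleton]
  constructor
  · rintro ⟨-, hsum⟩
    have hle : ∀ j : Fin k, (j.1 + 1) * x j ≤ 1 := fun j =>
      hsum ▸ Finset.single_le_sum (f := fun j : Fin k => (j.1 + 1) * x j)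
        (fun _ _ => Nat.zero_le _) (Finset.mem_univ j)
    have hzero : ∀ j : Fin k, j ≠ 0 → x j = 0 := fun j hj => by
      have hj1 : 1 ≤ j.1 := Nat.one_le_iff_ne_zero.mpr (Fin.val_ne_zero_iff.mpr hj)
      nlinarith [hle j]
    have hx0 : x 0 = 1 := by
      rwa [Finset.sum_eq_single (0 : Fin k) (fun j _ hj => by simp [hzero j hj]) (by simp),
        Fin.val_zero, zero_add, one_mul] at hsum
    funext j
    rcases eq_or_ne j 0 with rfl | hj
    · simp [hx0]
    · simp [hzero j hj, hj]
  · rintro rfl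
    refine ⟨fun j => ?_, ?_⟩
    · rcases eq_or_ne j 0 with rfl | hj <;> simp [*]
    · rw [Finset.sum_eq_single (0 : Fin k) (fun j _ hj => by simp [hj]) (by simp)]
      simp

lemma zeta_single {k : ℕ} (i : Fin k) (n : ℕ) : zeta (Pi.single i n) = n := by
  simp [zeta, Finset.sum_pi_single']

lemma pifact_single {k : ℕ} (i : Fin k) (n : ℕ) : pifact (Pi.single i n) = n.factorial := by
  rw [pifact, Finset.prod_eq_single i (fun j _ hj => by simp [hj]) (by simp)]
  simp

lemma deriv_exp_mul_rpow_one (a α : ℝ) :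
    deriv (fun u : ℝ => exp (a * u ^ α)) 1 = a * α * exp a := by
  have h := ((hasDerivAt_rpow_const (p := α) (Or.inl one_ne_zero)).const_mul a).exp
  simpa [one_rpow, mul_comm, mul_left_comm, mul_assoc] using h.deriv

lemma qkd_zero (k : ℕ) (lam α t : ℝ) :
    qkd k lam α 0 t = exp (-(t * (k ^ α * lam ^ α))) := by
  simp [qkd, Omega_zero, zeta, pifact, mul_assoc]

lemma qkd_one (k : ℕ) [NeZero k] (lam α t : ℝ) :
    qkd k lam α 1 t =
      α * (k : ℝ) ^ (α - 1) * lam ^ α * t * exp (-(t * (k ^ α * lam ^ α))) := by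
  have hk : (0 : ℝ) < k := Nat.cast_pos.mpr (Nat.pos_of_neZero k)
  rw [qkd, Omega_one, Finset.sum_singleton, zeta_single, pifact_single, iteratedDeriv_one,
    deriv_exp_mul_rpow_one, rpow_sub hk, rpow_one]
  field_simp
  ring

lemma hasDerivAt_one_sub_exp_sub_mul_exp (b c t : ℝ) :
    HasDerivAt (fun s => 1 - exp (-(s * c)) - b * s * exp (-(s * c)))
      (exp (-(t * c)) * (c - b + b * c * t)) t := by
  have hexp : HasDerivAt (fun s => exp (-(s * c))) (exp (-(t * c)) * -c) t := by
    simpa using ((hasDerivAt_id t).mul_const c).neg.exp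
  have hlin : HasDerivAt (fun s => b * s) b t := by
    simpa using (hasDerivAt_id t).const_mul b
  exact (((hasDerivAt_const t 1).sub hexp).sub (hlin.mul hexp)).congr_deriv (by ring)

theorem second_arrival_density_space_fractional_poisson_of_order_k_general
    (k : ℕ) (hk : 1 ≤ k) (lam α : ℝ)
    (t : ℝ) :
    deriv (fun s => 1 - qkd k lam α 0 s - qkd k lam α 1 s) t =
      lam ^ α * Real.exp (-(t * (k : ℝ) ^ α * lam ^ α)) *
        ((k : ℝ) ^ α - α * (k : ℝ) ^ (α - 1) + α * lam ^ α * t * (k : ℝ) ^ (2 * α - 1)) := by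
  have : NeZero k := ⟨by omega⟩
  have hkpos : (0 : ℝ) < k := by exact_mod_cast hk
  have hpow : (k : ℝ) ^ (α - 1) * (k : ℝ) ^ α = (k : ℝ) ^ (2 * α - 1) := by
    rw [← rpow_add hkpos, sub_add_eq_add_sub, ← two_mul]
  simp only [qkd_zero, qkd_one]
  rw [(hasDerivAt_one_sub_exp_sub_mul_exp _ _ t).deriv, ← hpow, mul_assoc t]
  ring

/-- The density of the first passage time at level `2` of the space-fractional Poisson
process of order `k`:
`(d/dt)[1 − q_{α,k}(0,t) − q_{α,k}(1,t)] =
λ^α e^{−t k^α λ^α} (k^α − α k^{α−1} + α λ^α t k^{2α−1})`. -/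
theorem second_arrival_density_space_fractional_poisson_of_order_k
    (k : ℕ) (hk : 1 ≤ k) (lam α : ℝ) (hlam : 0 < lam) (hα : α ∈ Set.Ioo (0 : ℝ) 1)
    (t : ℝ) (ht : 0 < t) :
    deriv (fun s => 1 - qkd k lam α 0 s - qkd k lam α 1 s) t =
      lam ^ α * Real.exp (-(t * (k : ℝ) ^ α * lam ^ α)) *
        ((k : ℝ) ^ α - α * (k : ℝ) ^ (α - 1) + α * lam ^ α * t * (k : ℝ) ^ (2 * α - 1)) :=
  second_arrival_density_space_fractional_poisson_of_order_k_general k hk lam α t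
end

section
/- Let β ∈ (0,1), ν > 0, and let r ≥ 1 be an integer. Then for every s > 0, ∫₀^∞ e^{−st} · e^{−tν} ∑_{m=0}^∞ ν^m t^{βr+m} M^r_{β, βr+m+1}(ν^β t^β) dt = 1 / (s((s+ν)^β − ν^β)^r); that is, the Laplace transform of t ↦ e^{−tν} ∑_{m=0}^∞ ν^m t^{βr+m} M^r_{β, βr+m+1}(ν^β t^β) equals s^{−1}((s+ν)^β − ν^β)^{−r}. -/
open scoped BigOperators

/-- The generalized (Prabhakar) Mittag-Leffler function
`M^c_{a,b}(z) = ∑_{n=0}^∞ (c)_n z^n / (n! Γ(an+b))`, where `(c)_n = ∏_{i<n} (c+i)`. -/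
noncomputable def prabhakar (a b c : ℝ) (z : ℝ) : ℝ :=
  ∑' n : ℕ, (∏ i ∈ Finset.range n, (c + i)) * z ^ n / (n.factorial * Real.Gamma (a * n + b))

/-!
Expanding the Prabhakar functions, the integrand is `e^{-(s+ν)t}` times the double series
`∑_{m,n} ν^m (ν^β)^n (r)_n / (n! Γ(βr+m+βn+1)) · t^{βr+m+βn}` with nonnegative terms, so it may be
integrated termwise. By `∫₀^∞ t^e e^{-pt} dt = Γ(e+1)/p^{e+1}` the Gamma factors cancel, and with
`p = s+ν`, `x = ν/p` the `(m, n)` term becomes `p^{-(βr+1)} · x^m · (r)_n/n! · (x^β)^n`: a geometric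
series in `m` times the binomial series of `(1 - x^β)^{-r}` in `n`. Finally `1 - x = s/p` and
`1 - x^β = (p^β - ν^β)/p^β`.
-/

open MeasureTheory Set Real
open scoped Nat

theorem integral_tsum_tsum_of_summable_integral_norm {α ι κ E : Type*} [MeasurableSpace α]
    {μ : Measure α} [Countable ι] [Countable κ] [NormedAddCommGroup E] [NormedSpace ℝ E]
    [CompleteSpace E] {F : ι → κ → α → E} (hF_int : ∀ i j, Integrable (F i j) μ)
    (hF_sum : Summable fun q : ι × κ ↦ ∫ a, ‖F q.1 q.2 a‖ ∂μ) :
    ∫ a, ∑' i, ∑' j, F i j a ∂μ = ∑' i, ∑' j, ∫ a, F i j a ∂μ := by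
  have h_int (q : ι × κ) : Integrable (F q.1 q.2) μ := hF_int q.1 q.2
  -- Summable `L¹` norms make the double series absolutely convergent almost everywhere.
  have h_ae : ∀ᵐ a ∂μ, Summable fun q : ι × κ ↦ ‖F q.1 q.2 a‖ := by
    refine summable_norm_of_tsum_eLpNorm_ne_top le_rfl (fun q ↦ (h_int q).1) ?_
    simp_rw [eLpNorm_one_eq_lintegral_enorm, ← ofReal_integral_norm_eq_lintegral_enorm (h_int _),
      ← ENNReal.ofReal_tsum_of_nonneg (fun q ↦ integral_nonneg fun a ↦ norm_nonneg _) hF_sum]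
    exact ENNReal.ofReal_ne_top
  calc ∫ a, ∑' i, ∑' j, F i j a ∂μ = ∫ a, ∑' q : ι × κ, F q.1 q.2 a ∂μ := by
        refine integral_congr_ae ?_
        filter_upwards [h_ae] with a ha
        exact ha.of_norm.tsum_prod.symm
    _ = ∑' q : ι × κ, ∫ a, F q.1 q.2 a ∂μ :=
        (integral_tsum_of_summable_integral_norm h_int hF_sum).symm
    _ = ∑' i, ∑' j, ∫ a, F i j a ∂μ :=
        (hF_sum.of_norm_bounded fun q ↦ norm_integral_le_integral_norm _).tsum_prod

theorem integrableOn_rpow_mul_exp_neg_mul {e p : ℝ} (he : -1 < e) (hp : 0 < p) :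
    IntegrableOn (fun t ↦ t ^ e * exp (-(p * t))) (Ioi 0) := by
  refine (integrableOn_rpow_mul_exp_neg_mul_rpow he one_pos hp).congr_fun (fun t _ ↦ ?_)
    measurableSet_Ioi
  simp only [rpow_one, neg_mul]

theorem integral_rpow_mul_exp_neg_mul_Ioi_eq_Gamma_div {e p : ℝ} (he : -1 < e) (hp : 0 < p) :
    ∫ t in Ioi 0, t ^ e * exp (-(p * t)) = Gamma (e + 1) / p ^ (e + 1) := by
  have := integral_rpow_mul_exp_neg_mul_Ioi (a := e + 1) (by linarith) hp
  rw [add_sub_cancel_right] at this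
  rw [this, div_rpow zero_le_one hp.le, one_rpow]
  ring

theorem integral_exp_neg_mul_mul_tsum_tsum_rpow {ι κ : Type*} [Countable ι] [Countable κ]
    {p : ℝ} (hp : 0 < p) {a e : ι → κ → ℝ} (he : ∀ i j, -1 < e i j)
    (hsum : Summable fun q : ι × κ ↦
      ‖a q.1 q.2 * (Gamma (e q.1 q.2 + 1) / p ^ (e q.1 q.2 + 1))‖) :
    ∫ t in Ioi 0, exp (-(p * t)) * ∑' i, ∑' j, a i j * t ^ e i j =
      ∑' i, ∑' j, a i j * (Gamma (e i j + 1) / p ^ (e i j + 1)) := by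
  have h_norm (i : ι) (j : κ) : ∫ t in Ioi 0, ‖a i j * (t ^ e i j * exp (-(p * t)))‖ =
      ‖a i j * (Gamma (e i j + 1) / p ^ (e i j + 1))‖ := by
    have h_pos : 0 < Gamma (e i j + 1) / p ^ (e i j + 1) :=
      div_pos (Gamma_pos_of_pos (by linarith [he i j])) (rpow_pos_of_pos hp _)
    rw [norm_mul, norm_of_nonneg h_pos.le,
      ← integral_rpow_mul_exp_neg_mul_Ioi_eq_Gamma_div (he i j) hp, ← integral_const_mul]
    refine setIntegral_congr_fun measurableSet_Ioi fun t ht ↦ ?_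
    rw [norm_mul, norm_of_nonneg (mul_nonneg (rpow_nonneg ht.out.le _) (exp_pos _).le)]
  calc ∫ t in Ioi 0, exp (-(p * t)) * ∑' i, ∑' j, a i j * t ^ e i j
      = ∫ t in Ioi 0, ∑' i, ∑' j, a i j * (t ^ e i j * exp (-(p * t))) := by
        congr 1 with t
        rw [← tsum_mul_left]
        congr 1 with i
        rw [← tsum_mul_left]
        congr 1 with j
        ring
    _ = ∑' i, ∑' j, ∫ t in Ioi 0, a i j * (t ^ e i j * exp (-(p * t))) :=
        integral_tsum_tsum_of_summable_integral_norm
          (fun i j ↦ (integrableOn_rpow_mul_exp_neg_mul (he i j) hp).const_mul _)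
          (by simpa only [h_norm] using hsum)
    _ = ∑' i, ∑' j, a i j * (Gamma (e i j + 1) / p ^ (e i j + 1)) := by
        simp_rw [integral_const_mul, integral_rpow_mul_exp_neg_mul_Ioi_eq_Gamma_div (he _ _) hp]

theorem hasSum_ascFactorial_div_factorial_mul_geometric {𝕜 : Type*} [NormedField 𝕜]
    [CharZero 𝕜] (r : ℕ) {y : 𝕜} (hy : ‖y‖ < 1) :
    HasSum (fun n ↦ (r.ascFactorial n : 𝕜) / n ! * y ^ n) ((1 - y) ^ r)⁻¹ := by
  cases r with
  | zero =>
    convert hasSum_single (f := fun n ↦ ((0 : ℕ).ascFactorial n : 𝕜) / n ! * y ^ n) 0 ?_ using 1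
    · simp
    · rintro (_ | n) hn
      · exact absurd rfl hn
      · simp [Nat.zero_ascFactorial]
  | succ k =>
    convert hasSum_choose_mul_geometric_of_norm_lt_one k hy using 1
    · ext n
      rw [Nat.ascFactorial_eq_factorial_mul_choose, add_comm k n, Nat.choose_symm_add]
      push_cast
      rw [mul_div_cancel_left₀ _ (Nat.cast_ne_zero.2 n.factorial_ne_zero)]
    · rw [one_div]

noncomputable def prabhakarCoeff (a b c : ℝ) (n : ℕ) : ℝ :=
  (∏ i ∈ Finset.range n, (c + i)) / (n ! * Gamma (a * n + b))

theorem prabhakar_eq_tsum (a b c z : ℝ) :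
    prabhakar a b c z = ∑' n : ℕ, prabhakarCoeff a b c n * z ^ n := by
  simp only [prabhakar, prabhakarCoeff, div_mul_eq_mul_div]

theorem tsum_mul_rpow_mul_prabhakar {a b c w z t : ℝ} (ht : 0 < t) :
    ∑' m : ℕ, w ^ m * t ^ (b + m) * prabhakar a (b + m + 1) c (z * t ^ a) =
      ∑' m : ℕ, ∑' n : ℕ,
        w ^ m * z ^ n * prabhakarCoeff a (b + m + 1) c n * t ^ (b + m + a * n) := by
  refine tsum_congr fun m ↦ ?_
  rw [prabhakar_eq_tsum, ← tsum_mul_left]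
  refine tsum_congr fun n ↦ ?_
  rw [rpow_add ht (b + m), rpow_mul ht.le, rpow_natCast]
  ring

theorem pow_mul_prabhakarCoeff_mul_Gamma_div_rpow {β ν p : ℝ} (hβ : 0 ≤ β) (hν : 0 ≤ ν)
    (hp : 0 < p) (r m n : ℕ) :
    ν ^ m * (ν ^ β) ^ n * prabhakarCoeff β (β * r + m + 1) r n *
        (Gamma (β * r + m + β * n + 1) / p ^ (β * r + m + β * n + 1)) =
      (p ^ (β * r + 1))⁻¹ * ((ν / p) ^ m * ((r.ascFactorial n : ℝ) / n ! * ((ν / p) ^ β) ^ n)) := by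
  have hΓ : Gamma (β * r + m + β * n + 1) ≠ 0 := (Gamma_pos_of_pos (by positivity)).ne'
  have hpow : p ^ (β * r + m + β * n + 1) = p ^ (β * r + 1) * p ^ m * (p ^ β) ^ n := by
    rw [show β * r + m + β * n + 1 = β * r + 1 + m + β * n by ring, rpow_add hp, rpow_add hp,
      rpow_natCast, rpow_mul hp.le, rpow_natCast]
  rw [prabhakarCoeff, show β * n + (β * r + m + 1) = β * r + m + β * n + 1 by ring, hpow,
    Nat.ascFactorial_eq_prod_range, div_rpow hν hp.le, div_pow, div_pow]
  push_cast
  field_simp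

theorem laplace_transform_tempered_mittagLeffler_series_general
    (β ν : ℝ) (hβ : β ∈ Set.Ioo (0 : ℝ) 1) (hν : 0 < ν) (r : ℕ)
    (s : ℝ) (hs : 0 < s) :
    (∫ t in Set.Ioi (0 : ℝ),
        Real.exp (-(s * t)) * (Real.exp (-(t * ν)) *
          ∑' m : ℕ, ν ^ m * t ^ (β * r + m) * prabhakar β (β * r + m + 1) r (ν ^ β * t ^ β))) =
      1 / (s * ((s + ν) ^ β - ν ^ β) ^ r) := by
  obtain ⟨hβ₀, -⟩ := hβ
  have hp : 0 < s + ν := by linarith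
  have hx : 0 ≤ ν / (s + ν) := by positivity
  have hx₁ : ν / (s + ν) < 1 := (div_lt_one hp).2 (by linarith)
  have hy : ‖(ν / (s + ν)) ^ β‖ < 1 := by
    rw [norm_of_nonneg (by positivity)]
    exact rpow_lt_one hx hx₁ hβ₀
  have h_geom := hasSum_geometric_of_lt_one hx hx₁
  have h_binom := hasSum_ascFactorial_div_factorial_mul_geometric r hy
  have h_term := pow_mul_prabhakarCoeff_mul_Gamma_div_rpow hβ₀.le hν.le hp r
  calc _ = ∫ t in Ioi 0, exp (-((s + ν) * t)) * ∑' m : ℕ, ∑' n : ℕ,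
        ν ^ m * (ν ^ β) ^ n * prabhakarCoeff β (β * r + m + 1) r n * t ^ (β * r + m + β * n) := by
        refine setIntegral_congr_fun measurableSet_Ioi fun t ht ↦ ?_
        rw [← tsum_mul_rpow_mul_prabhakar ht, ← mul_assoc, ← exp_add]
        congr 2
        ring
    _ = ((s + ν) ^ (β * r + 1))⁻¹ * ((1 - ν / (s + ν))⁻¹ * ((1 - (ν / (s + ν)) ^ β) ^ r)⁻¹) := by
        rw [integral_exp_neg_mul_mul_tsum_tsum_rpow hp
          (fun m n ↦ by linarith [show 0 ≤ β * r + m + β * n by positivity])]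
        · simp_rw [h_term, tsum_mul_left, h_binom.tsum_eq, tsum_mul_right, h_geom.tsum_eq]
        · simp_rw [h_term]
          exact summable_norm_iff.2 ((h_geom.summable.mul_of_nonneg h_binom.summable
            (fun m ↦ by positivity) (fun n ↦ by positivity)).mul_left _)
    _ = 1 / (s * ((s + ν) ^ β - ν ^ β) ^ r) := by
        have : 0 < (s + ν) ^ β := rpow_pos_of_pos hp β
        rw [div_rpow hν.le hp.le, rpow_add hp, rpow_one, rpow_mul hp.le, rpow_natCast,
          one_sub_div hp.ne', one_sub_div this.ne', add_sub_cancel_right, div_pow]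
        field_simp

/-- The Laplace transform identity:
`∫₀^∞ e^{−st} e^{−tν} ∑_{m=0}^∞ ν^m t^{βr+m} M^r_{β,βr+m+1}(ν^β t^β) dt
  = 1 / (s((s+ν)^β − ν^β)^r)`. -/
theorem laplace_transform_tempered_mittagLeffler_series
    (β ν : ℝ) (hβ : β ∈ Set.Ioo (0 : ℝ) 1) (hν : 0 < ν) (r : ℕ) (hr : 1 ≤ r)
    (s : ℝ) (hs : 0 < s) :
    (∫ t in Set.Ioi (0 : ℝ),
        Real.exp (-(s * t)) * (Real.exp (-(t * ν)) *
          ∑' m : ℕ, ν ^ m * t ^ (β * r + m) * prabhakar β (β * r + m + 1) r (ν ^ β * t ^ β))) =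
      1 / (s * ((s + ν) ^ β - ν ^ β) ^ r) :=
  laplace_transform_tempered_mittagLeffler_series_general β ν hβ hν r s hs
end

section
/- Let β ∈ (0,1), ν ≥ 0, and let r ≥ 1 be an integer. Then for every t ≥ 0, ∫₀ᵗ e^{−νy} y^{βr−1} M^r_{β, βr}(ν^β y^β) dy = e^{−tν} ∑_{m=0}^∞ ν^m t^{βr+m} M^r_{β, βr+m+1}(ν^β t^β). -/
open scoped BigOperators

/-!
Expanding `M^r_{β,βr}(ν^β y^β)` in powers `y^{βn}` and integrating term by term reduces the left
side to the integrals `∫₀ᵗ e^{-νy} y^{s-1} dy` with `s = βn + βr`. Writing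
`e^{-νy} = e^{-tν} e^{ν(t-y)}`, expanding the second factor and using Euler's Beta integral gives
`∫₀ᵗ e^{-νy} y^{s-1} dy = e^{-tν} ∑ₘ νᵐ Γ(s) / Γ(s+m+1) t^{s+m}`; exchanging the sums over `n` and
`m` reassembles the functions `M^r_{β,βr+m+1}(ν^β t^β)`. Every term is nonnegative, so both
interchanges are Tonelli's theorem in `ℝ≥0∞`; the only analytic input is the convergence of the
Prabhakar series, which follows from the ratio test and the log-convexity of `Γ`.
-/

open MeasureTheory Real Set Filter Topology
open scoped Nat

theorem Real.Gamma_add_one_le_rpow_mul_Gamma_add {x β : ℝ} (hx : 0 < x) (hβ0 : 0 < β)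
    (hβ1 : β < 1) : Gamma (x + 1) ≤ (x + β) ^ (1 - β) * Gamma (x + β) := by
  have hxβ : 0 < x + β := by linarith
  have hΓ : 0 < Gamma (x + β) := Gamma_pos_of_pos hxβ
  -- log-convexity of `Γ` between `x + β` and `x + β + 1`, evaluated at `x + 1`
  have h := Gamma_mul_add_mul_le_rpow_Gamma_mul_rpow_Gamma hxβ (by linarith : 0 < x + β + 1)
    hβ0 (by linarith : 0 < 1 - β) (by ring)
  rwa [show β * (x + β) + (1 - β) * (x + β + 1) = x + 1 by ring, Gamma_add_one hxβ.ne',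
    mul_rpow hxβ.le hΓ.le, mul_left_comm, ← rpow_add hΓ, add_sub_cancel, rpow_one] at h

theorem Real.tendsto_Gamma_div_Gamma_add {β : ℝ} (hβ0 : 0 < β) (hβ1 : β < 1) :
    Tendsto (fun x => Gamma x / Gamma (x + β)) atTop (𝓝 0) := by
  have hbound : Tendsto (fun x => (1 + β / x) * (x + β) ^ (-β)) atTop (𝓝 0) := by
    simpa using (tendsto_const_nhds.add (tendsto_const_nhds.div_atTop tendsto_id)).mul
      ((tendsto_rpow_neg_atTop hβ0).comp (tendsto_atTop_add_const_right _ β tendsto_id))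
  refine tendsto_of_tendsto_of_tendsto_of_le_of_le' tendsto_const_nhds hbound ?_ ?_
  all_goals filter_upwards [eventually_gt_atTop 0] with x hx
  · have := Gamma_pos_of_pos hx
    have := Gamma_pos_of_pos (by linarith : 0 < x + β)
    positivity
  · have hxβ : 0 < x + β := by linarith
    have hΓ := Gamma_pos_of_pos hxβ
    have key := Gamma_add_one_le_rpow_mul_Gamma_add hx hβ0 hβ1
    rw [Gamma_add_one hx.ne', sub_eq_add_neg, rpow_add hxβ, rpow_one] at key
    rw [div_le_iff₀ hΓ]
    calc Gamma x = x * Gamma x / x := by field_simp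
      _ ≤ (x + β) * (x + β) ^ (-β) * Gamma (x + β) / x := by gcongr
      _ = (1 + β / x) * (x + β) ^ (-β) * Gamma (x + β) := by field_simp

theorem Real.integral_rpow_mul_sub_rpow {s u t : ℝ} (hs : 0 < s) (hu : 0 < u) (ht : 0 < t) :
    ∫ x in (0 : ℝ)..t, x ^ (s - 1) * (t - x) ^ (u - 1) =
      Gamma s * Gamma u / Gamma (s + u) * t ^ (s + u - 1) := by
  have hsu : Complex.Gamma (s + u) ≠ 0 := Complex.Gamma_ne_zero_of_re_pos (by simp; linarith)
  have hbeta := Complex.Gamma_mul_Gamma_eq_betaIntegral (s := s) (t := u) (by simpa) (by simpa)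
  apply Complex.ofReal_injective
  have hcongr : EqOn (fun x : ℝ => ((x ^ (s - 1) * (t - x) ^ (u - 1) : ℝ) : ℂ))
      (fun x : ℝ => (x : ℂ) ^ ((s : ℂ) - 1) * ((t : ℂ) - x) ^ ((u : ℂ) - 1)) (uIcc 0 t) := by
    intro x hx
    rw [uIcc_of_le ht.le] at hx
    push_cast [Complex.ofReal_cpow hx.1, Complex.ofReal_cpow (sub_nonneg.2 hx.2)]
    rfl
  rw [← intervalIntegral.integral_ofReal, intervalIntegral.integral_congr hcongr,
    Complex.betaIntegral_scaled s u ht]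
  push_cast [Complex.ofReal_cpow ht.le, ← Complex.Gamma_ofReal, hbeta]
  field_simp

theorem Real.integral_sub_pow_mul_rpow (m : ℕ) {s t : ℝ} (hs : 0 < s) (ht : 0 < t) :
    ∫ y in (0 : ℝ)..t, (t - y) ^ m * y ^ (s - 1) =
      m ! * Gamma s / Gamma (s + m + 1) * t ^ (s + m) := by
  have h := Real.integral_rpow_mul_sub_rpow hs (by positivity : (0 : ℝ) < m + 1) ht
  simp only [add_sub_cancel_right, Real.rpow_natCast, Real.Gamma_nat_eq_factorial, ← add_assoc] at h
  rw [mul_comm (m ! : ℝ), ← h]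
  exact intervalIntegral.integral_congr fun y _ => mul_comm _ _

theorem setLIntegral_exp_neg_mul_rpow {ν s t : ℝ} (hν : 0 ≤ ν) (hs : 0 < s) (ht : 0 < t) :
    ∫⁻ y in Ioc 0 t, ENNReal.ofReal (exp (-(ν * y)) * y ^ (s - 1)) =
      ENNReal.ofReal (exp (-(t * ν))) *
        ∑' m : ℕ, ENNReal.ofReal (ν ^ m * (Gamma s / Gamma (s + m + 1) * t ^ (s + m))) := by
  set u : ℕ → ℝ → ℝ := fun m y => ν ^ m / m ! * ((t - y) ^ m * y ^ (s - 1))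
  have hu_nonneg : ∀ m, ∀ y ∈ Ioc 0 t, 0 ≤ u m y := fun m y hy => by
    have : 0 ≤ t - y := sub_nonneg.2 hy.2
    have : 0 ≤ y := hy.1.le
    positivity
  -- `e^{-νy} = e^{-tν} e^{ν(t-y)}`, expanded as a power series in `t - y`
  have hexpand : ∀ y ∈ Ioc 0 t, ENNReal.ofReal (exp (-(ν * y)) * y ^ (s - 1)) =
      ENNReal.ofReal (exp (-(t * ν))) * ∑' m, ENNReal.ofReal (u m y) := by
    intro y hy
    have hsum : HasSum (fun m => u m y) (exp (ν * (t - y)) * y ^ (s - 1)) := by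
      have hterm : (fun m => u m y) = fun m => (ν * (t - y)) ^ m / m ! * y ^ (s - 1) := by
        funext m
        simp only [u, mul_pow]
        ring
      rw [hterm, Real.exp_eq_exp_ℝ]
      exact (NormedSpace.expSeries_div_hasSum_exp (ν * (t - y))).mul_right (y ^ (s - 1))
    rw [← ENNReal.ofReal_tsum_of_nonneg (hu_nonneg · y hy) hsum.summable, hsum.tsum_eq,
      ← ENNReal.ofReal_mul (exp_pos _).le, ← mul_assoc, ← exp_add]
    congr 3
    ring
  rw [setLIntegral_congr_fun measurableSet_Ioc hexpand, lintegral_const_mul _ (by fun_prop),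
    lintegral_tsum (fun m => by fun_prop)]
  congr 1
  refine tsum_congr fun m => ?_
  have hint : IntegrableOn (u m) (Ioc 0 t) :=
    (((intervalIntegral.intervalIntegrable_rpow' (by linarith : -1 < s - 1)).continuousOn_mul
      (by fun_prop : ContinuousOn (fun y => (t - y) ^ m) _)).const_mul _).1
  rw [← ofReal_integral_eq_lintegral_ofReal hint
    ((ae_restrict_iff' measurableSet_Ioc).2 (ae_of_all _ (hu_nonneg m))),
    integral_const_mul, ← intervalIntegral.integral_of_le ht.le,
    Real.integral_sub_pow_mul_rpow m hs ht]
  congr 1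
  field_simp

noncomputable def prabhakarTerm (a b c z : ℝ) (n : ℕ) : ℝ :=
  (∏ i ∈ Finset.range n, (c + i)) * z ^ n / (n ! * Gamma (a * n + b))

theorem prabhakarTerm_nonneg {a b c z : ℝ} (ha : 0 ≤ a) (hb : 0 < b) (hc : 0 ≤ c) (hz : 0 ≤ z)
    (n : ℕ) : 0 ≤ prabhakarTerm a b c z n := by
  have : 0 < Gamma (a * n + b) := Gamma_pos_of_pos (by positivity)
  unfold prabhakarTerm
  positivity

theorem prabhakar_nonneg {a b c z : ℝ} (ha : 0 ≤ a) (hb : 0 < b) (hc : 0 ≤ c) (hz : 0 ≤ z) :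
    0 ≤ prabhakar a b c z :=
  tsum_nonneg (prabhakarTerm_nonneg ha hb hc hz)

theorem prabhakarTerm_succ {a b : ℝ} (c z : ℝ) {n : ℕ} (hΓ : Gamma (a * n + b) ≠ 0) :
    prabhakarTerm a b c z (n + 1) = prabhakarTerm a b c z n *
      ((c + n) * z * Gamma (a * n + b) / ((n + 1) * Gamma (a * n + b + a))) := by
  simp only [prabhakarTerm, Finset.prod_range_succ, Nat.factorial_succ, pow_succ]
  push_cast
  rw [show a * (n + 1) + b = a * n + b + a by ring]
  generalize Gamma (a * n + b) = G at hΓ ⊢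
  field_simp

theorem measurable_prabhakar (a b c : ℝ) : Measurable (prabhakar a b c) :=
  Measurable.tsum fun n => by fun_prop

theorem summable_prabhakarTerm {β b : ℝ} (hβ0 : 0 < β) (hβ1 : β < 1) (hb : 0 < b) (c z : ℝ) :
    Summable (prabhakarTerm β b c z) := by
  refine summable_of_ratio_norm_eventually_le (r := 1 / 2) (by norm_num) ?_
  have hx : Tendsto (fun n : ℕ => β * n + b) atTop atTop :=
    tendsto_atTop_add_const_right _ b (tendsto_natCast_atTop_atTop.const_mul_atTop hβ0)
  have hratio := ((tendsto_Gamma_div_Gamma_add hβ0 hβ1).comp hx).const_mul ((|c| + 1) * |z|)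
  rw [mul_zero] at hratio
  filter_upwards [hratio.eventually (ge_mem_nhds (by norm_num : (0 : ℝ) < 1 / 2))] with n hn
  have hΓ : 0 < Gamma (β * n + b) := Gamma_pos_of_pos (by positivity)
  have hΓ' : 0 < Gamma (β * n + b + β) := Gamma_pos_of_pos (by positivity)
  have hcn : |c + n| / (n + 1) ≤ |c| + 1 := by
    rw [div_le_iff₀ (by positivity)]
    have := abs_add_le c n
    rw [Nat.abs_cast] at this
    nlinarith [abs_nonneg c, (Nat.cast_nonneg n : (0 : ℝ) ≤ n)]
  rw [prabhakarTerm_succ c z hΓ.ne', norm_mul, mul_comm]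
  gcongr
  calc ‖(c + n) * z * Gamma (β * n + b) / ((n + 1) * Gamma (β * n + b + β))‖
      = |c + n| / (n + 1) * |z| * (Gamma (β * n + b) / Gamma (β * n + b + β)) := by
        rw [Real.norm_eq_abs, abs_div, abs_mul, abs_mul, abs_mul, abs_of_pos hΓ, abs_of_pos hΓ',
          abs_of_pos (by positivity : (0 : ℝ) < n + 1)]
        field_simp
    _ ≤ (|c| + 1) * |z| * (Gamma (β * n + b) / Gamma (β * n + b + β)) := by gcongr
    _ ≤ 1 / 2 := hn

theorem ofReal_prabhakar {β b c z : ℝ} (hβ0 : 0 < β) (hβ1 : β < 1) (hb : 0 < b) (hc : 0 ≤ c)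
    (hz : 0 ≤ z) :
    ENNReal.ofReal (prabhakar β b c z) = ∑' n, ENNReal.ofReal (prabhakarTerm β b c z n) :=
  ENNReal.ofReal_tsum_of_nonneg (prabhakarTerm_nonneg hβ0.le hb hc hz)
    (summable_prabhakarTerm hβ0 hβ1 hb c z)

theorem rpow_sub_one_mul_prabhakarTerm {a b c w y : ℝ} (hy : 0 < y) (n : ℕ) :
    y ^ (b - 1) * prabhakarTerm a b c (w * y ^ a) n =
      prabhakarTerm a b c w n * y ^ (a * n + b - 1) := by
  rw [add_sub_assoc, rpow_add hy, rpow_mul hy.le, rpow_natCast]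
  simp only [prabhakarTerm, mul_pow]
  ring

theorem prabhakarTerm_mul_Gamma_div_Gamma {a b : ℝ} (c w : ℝ) {t : ℝ} (ha : 0 ≤ a) (hb : 0 < b)
    (ht : 0 < t) (n m : ℕ) :
    prabhakarTerm a b c w n *
        (Gamma (a * n + b) / Gamma (a * n + b + m + 1) * t ^ (a * n + b + m)) =
      t ^ (b + m) * prabhakarTerm a (b + m + 1) c (w * t ^ a) n := by
  have hΓ : Gamma (a * n + b) ≠ 0 := (Gamma_pos_of_pos (by positivity)).ne'
  rw [add_assoc (a * n), rpow_add ht, rpow_mul ht.le, rpow_natCast]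
  simp only [prabhakarTerm, mul_pow, ← add_assoc]
  field_simp

theorem setLIntegral_exp_neg_mul_rpow_mul_prabhakar {β ν b c t : ℝ} (hβ0 : 0 < β) (hβ1 : β < 1)
    (hν : 0 ≤ ν) (hb : 0 < b) (hc : 0 ≤ c) (ht : 0 < t) :
    ∫⁻ y in Ioc 0 t,
        ENNReal.ofReal (exp (-(ν * y)) * y ^ (b - 1) * prabhakar β b c (ν ^ β * y ^ β)) =
      ENNReal.ofReal (exp (-(t * ν))) *
        ∑' m : ℕ,
          ENNReal.ofReal (ν ^ m * t ^ (b + m) * prabhakar β (b + m + 1) c (ν ^ β * t ^ β)) := by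
  have hw : 0 ≤ ν ^ β := rpow_nonneg hν β
  have hs : ∀ n : ℕ, 0 < β * n + b := fun n => by positivity
  have hk := prabhakarTerm_nonneg hβ0.le hb hc hw
  have hexpand : ∀ y ∈ Ioc 0 t,
      ENNReal.ofReal (exp (-(ν * y)) * y ^ (b - 1) * prabhakar β b c (ν ^ β * y ^ β)) =
        ∑' n, ENNReal.ofReal (prabhakarTerm β b c (ν ^ β) n) *
          ENNReal.ofReal (exp (-(ν * y)) * y ^ (β * n + b - 1)) := by
    intro y hy
    have hy0 : 0 ≤ y := hy.1.le
    rw [ENNReal.ofReal_mul (by positivity), ofReal_prabhakar hβ0 hβ1 hb hc (by positivity),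
      ← ENNReal.tsum_mul_left]
    refine tsum_congr fun n => ?_
    rw [← ENNReal.ofReal_mul (hk n), ← ENNReal.ofReal_mul (by positivity), mul_left_comm, mul_assoc,
      rpow_sub_one_mul_prabhakarTerm hy.1]
  have hterm : ∀ n m : ℕ, ENNReal.ofReal (prabhakarTerm β b c (ν ^ β) n) *
      ENNReal.ofReal
          (ν ^ m * (Gamma (β * n + b) / Gamma (β * n + b + m + 1) * t ^ (β * n + b + m))) =
        ENNReal.ofReal (ν ^ m * t ^ (b + m)) *
          ENNReal.ofReal (prabhakarTerm β (b + m + 1) c (ν ^ β * t ^ β) n) := by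
    intro n m
    rw [← ENNReal.ofReal_mul (hk n), ← ENNReal.ofReal_mul (by positivity), mul_left_comm,
      prabhakarTerm_mul_Gamma_div_Gamma c _ hβ0.le hb ht, mul_assoc]
  have hmeas : ∀ s : ℝ, Measurable fun y : ℝ => ENNReal.ofReal (exp (-(ν * y)) * y ^ s) :=
    fun s => by fun_prop
  rw [setLIntegral_congr_fun measurableSet_Ioc hexpand, lintegral_tsum (fun n => by fun_prop)]
  calc _ = ∑' n, ∑' m : ℕ, ENNReal.ofReal (exp (-(t * ν))) * (ENNReal.ofReal (ν ^ m * t ^ (b + m)) *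
          ENNReal.ofReal (prabhakarTerm β (b + m + 1) c (ν ^ β * t ^ β) n)) := by
        simp_rw [lintegral_const_mul _ (hmeas _), setLIntegral_exp_neg_mul_rpow hν (hs _) ht,
          ← ENNReal.tsum_mul_left, mul_left_comm _ (ENNReal.ofReal (exp _)), hterm]
    _ = ∑' m : ℕ, ENNReal.ofReal (exp (-(t * ν))) *
          ENNReal.ofReal (ν ^ m * t ^ (b + m) * prabhakar β (b + m + 1) c (ν ^ β * t ^ β)) := by
        rw [ENNReal.tsum_comm]
        refine tsum_congr fun m => ?_
        rw [ENNReal.tsum_mul_left, ENNReal.tsum_mul_left,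
          ENNReal.ofReal_mul (by positivity : 0 ≤ ν ^ m * t ^ (b + m)),
          ofReal_prabhakar hβ0 hβ1 (by positivity) hc (by positivity)]
    _ = _ := ENNReal.tsum_mul_left

/-- The integral identity:
`∫₀ᵗ e^{−νy} y^{βr−1} M^r_{β,βr}(ν^β y^β) dy
  = e^{−tν} ∑_{m=0}^∞ ν^m t^{βr+m} M^r_{β,βr+m+1}(ν^β t^β)`. -/
theorem integral_tempered_mittagLeffler_series
    (β ν : ℝ) (hβ : β ∈ Set.Ioo (0 : ℝ) 1) (hν : 0 ≤ ν) (r : ℕ) (hr : 1 ≤ r)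
    (t : ℝ) (ht : 0 ≤ t) :
    (∫ y in (0 : ℝ)..t,
        Real.exp (-(ν * y)) * y ^ (β * r - 1) * prabhakar β (β * r) r (ν ^ β * y ^ β)) =
      Real.exp (-(t * ν)) *
        ∑' m : ℕ, ν ^ m * t ^ (β * r + m) * prabhakar β (β * r + m + 1) r (ν ^ β * t ^ β) := by
  obtain ⟨hβ0, hβ1⟩ := hβ
  have hb : 0 < β * r := mul_pos hβ0 (by exact_mod_cast hr)
  obtain rfl | ht := ht.eq_or_lt
  · have hzero : ∀ m : ℕ, (0 : ℝ) ^ (β * r + m) = 0 := fun m => zero_rpow (by positivity)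
    simp [hzero]
  have hf : 0 ≤ᵐ[volume.restrict (Ioc 0 t)]
      fun y => exp (-(ν * y)) * y ^ (β * r - 1) * prabhakar β (β * r) r (ν ^ β * y ^ β) := by
    refine (ae_restrict_iff' measurableSet_Ioc).2 (ae_of_all _ fun y hy => ?_)
    have hy0 := hy.1.le
    have := prabhakar_nonneg hβ0.le hb r.cast_nonneg (by positivity : 0 ≤ ν ^ β * y ^ β)
    positivity
  rw [intervalIntegral.integral_of_le ht.le, integral_eq_lintegral_of_nonneg_ae hf
    (by have := measurable_prabhakar β (β * r) r; fun_prop),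
    setLIntegral_exp_neg_mul_rpow_mul_prabhakar hβ0 hβ1 hν hb r.cast_nonneg ht, ENNReal.toReal_mul,
    ENNReal.toReal_ofReal (exp_pos _).le, ENNReal.tsum_toReal_eq fun _ => ENNReal.ofReal_ne_top]
  congr 1
  refine tsum_congr fun m => ENNReal.toReal_ofReal ?_
  have := prabhakar_nonneg hβ0.le (by positivity : 0 < β * r + m + 1) r.cast_nonneg
    (by positivity : 0 ≤ ν ^ β * t ^ β)
  positivity
end

section
/- Let k ≥ 1 be an integer, λ > 0, and a ≥ 0. The probability mass function n ↦ e^{−kλa} c_k(n, λa) of the homogeneous Poisson field of order k (on a set of measure a) has mean ∑_{n=0}^∞ n · e^{−kλa} c_k(n, λa) = (k(k+1)/2) λ a and variance ∑_{n=0}^∞ n² · e^{−kλa} c_k(n, λa) − ((k(k+1)/2) λ a)² = (k(k+1)(2k+1)/6) λ a. -/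
open scoped BigOperators

open Finset

/-! ### Auxiliary lemmas -/

private lemma tsum_h (y : ℝ) : ∑' m : ℕ, y ^ m / (m.factorial : ℝ) = Real.exp y := by
  rw [Real.exp_eq_exp_ℝ, NormedSpace.exp_eq_tsum_div]

private lemma shift1 (y : ℝ) (n : ℕ) :
    ((n + 1 : ℕ) : ℝ) * (y ^ (n + 1) / ((n + 1).factorial : ℝ)) =
      y * (y ^ n / (n.factorial : ℝ)) := by
  have h : ((n.factorial : ℝ)) ≠ 0 := Nat.cast_ne_zero.mpr n.factorial_ne_zero
  rw [Nat.factorial_succ, pow_succ]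
  push_cast
  field_simp

private lemma summable1 (y : ℝ) : Summable (fun m : ℕ => (m : ℝ) * (y ^ m / m.factorial)) := by
  rw [← summable_nat_add_iff 1]
  refine (((Real.summable_pow_div_factorial y).mul_left y)).congr fun n => ?_
  exact (shift1 y n).symm

private lemma tsum1 (y : ℝ) :
    ∑' m : ℕ, (m : ℝ) * (y ^ m / m.factorial) = y * Real.exp y := by
  rw [Summable.tsum_eq_zero_add (summable1 y)]
  simp only [Nat.cast_zero, zero_mul, zero_add]
  rw [show (fun n : ℕ => ((n + 1 : ℕ) : ℝ) * (y ^ (n+1) / ((n+1).factorial : ℝ)))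
      = fun n : ℕ => y * (y ^ n / (n.factorial : ℝ)) from funext fun n => shift1 y n,
    tsum_mul_left, tsum_h]

private lemma summable2 (y : ℝ) :
    Summable (fun m : ℕ => (m : ℝ) * (m : ℝ) * (y ^ m / m.factorial)) := by
  rw [← summable_nat_add_iff 1]
  refine (((summable1 y).add (Real.summable_pow_div_factorial y)).mul_left y).congr fun n => ?_
  have := shift1 y n
  push_cast at this ⊢
  rw [mul_assoc, this]; ring

private lemma tsum2 (y : ℝ) :
    ∑' m : ℕ, (m : ℝ) * (m : ℝ) * (y ^ m / m.factorial) = (y * y + y) * Real.exp y := by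
  rw [Summable.tsum_eq_zero_add (summable2 y)]
  simp only [Nat.cast_zero, zero_mul, zero_add]
  have : (fun n : ℕ => ((n + 1 : ℕ) : ℝ) * ((n + 1 : ℕ) : ℝ) * (y ^ (n+1) / ((n+1).factorial : ℝ)))
      = fun n : ℕ => y * ((n : ℝ) * (y ^ n / (n.factorial : ℝ)) + y ^ n / (n.factorial : ℝ)) := by
    funext n
    have := shift1 y n
    push_cast at this ⊢
    rw [mul_assoc, this]; ring
  rw [this, tsum_mul_left, Summable.tsum_add (summable1 y) (Real.summable_pow_div_factorial y), tsum1,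
    tsum_h]
  ring

/-- Factorization of a sum over a finite product of copies of `ℕ`. -/
private lemma pi_tsum : ∀ {k : ℕ} (g : Fin k → ℕ → ℝ),
    (∀ i m, 0 ≤ g i m) → (∀ i, Summable (g i)) →
    Summable (fun x : Fin k → ℕ => ∏ i, g i (x i)) ∧
    ∑' x : Fin k → ℕ, ∏ i, g i (x i) = ∏ i, ∑' m, g i m := by
  intro k
  induction k with
  | zero =>
    intro g _ _
    constructor
    · exact Summable.of_finite
    · simp only [Finset.univ_eq_empty, Finset.prod_empty]
      exact tsum_eq_single (default) (fun b hb => absurd (Subsingleton.elim b default) hb)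
  | succ k ih =>
    intro g h0 hs
    obtain ⟨ihS, ihT⟩ := ih (fun i => g i.succ) (fun i m => h0 i.succ m) (fun i => hs i.succ)
    have ihS' : Summable (fun z : Fin k → ℕ => ∏ i : Fin k, g i.succ (z i)) := ihS
    have hFsum : Summable (fun p : ℕ × (Fin k → ℕ) => g 0 p.1 * ∏ i : Fin k, g i.succ (p.2 i)) :=
      Summable.mul_of_nonneg (f := g 0) (g := fun z : Fin k → ℕ => ∏ i : Fin k, g i.succ (z i))
        (hs 0) ihS' (fun m => h0 0 m)
        (fun z => Finset.prod_nonneg fun i _ => h0 i.succ (z i))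
    have hpt : ∀ p : ℕ × (Fin k → ℕ),
        (∏ i : Fin (k+1), g i ((Fin.consEquiv (fun _ => ℕ)) p i))
          = g 0 p.1 * ∏ i : Fin k, g i.succ (p.2 i) := by
      intro p
      simp only [Fin.consEquiv_apply]
      rw [Fin.prod_univ_succ]
      simp [Fin.cons_zero, Fin.cons_succ]
    have hcomp : (fun x : Fin (k+1) → ℕ => ∏ i, g i (x i)) ∘ (Fin.consEquiv (fun _ => ℕ))
        = (fun p : ℕ × (Fin k → ℕ) => g 0 p.1 * ∏ i : Fin k, g i.succ (p.2 i)) :=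
      funext hpt
    constructor
    · exact ((Fin.consEquiv (fun _ => ℕ)).summable_iff).mp (hcomp ▸ hFsum)
    · rw [← (Fin.consEquiv (fun _ => ℕ)).tsum_eq, tsum_congr hpt]
      rw [Fin.prod_univ_succ, ← ihT]
      exact (Summable.tsum_mul_tsum (f := g 0) (g := fun z : Fin k → ℕ => ∏ i : Fin k, g i.succ (z i))
        (hs 0) ihS' hFsum).symm

private lemma fiber_eq (k n : ℕ) :
    (fun x : Fin k → ℕ => ∑ i : Fin k, ((i : ℕ) + 1) * x i) ⁻¹' {n} = ↑(Omega k n) := by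
  ext x
  simp only [Set.mem_preimage, Set.mem_singleton_iff, Omega, Finset.coe_filter,
    Set.mem_setOf_eq, Fintype.mem_piFinset, Finset.mem_range, Nat.lt_succ_iff]
  constructor
  · intro hx
    refine ⟨fun i => ?_, hx⟩
    calc x i ≤ ((i : ℕ) + 1) * x i := Nat.le_mul_of_pos_left _ (Nat.succ_pos _)
      _ ≤ ∑ j : Fin k, ((j : ℕ) + 1) * x j :=
        Finset.single_le_sum (f := fun j : Fin k => ((j : ℕ) + 1) * x j)
          (fun j _ => Nat.zero_le _) (mem_univ i)
      _ = n := hx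
  · exact fun hx => hx.2

/-- Grouping a sum over all tuples according to the value of `∑ (i+1)·xᵢ`. -/
private lemma group_tsum {k : ℕ} (F : (Fin k → ℕ) → ℝ) (hF : Summable F) :
    ∑' n : ℕ, ∑ x ∈ Omega k n, F x = ∑' x, F x := by
  have h := (hF.hasSum.tsum_fiberwise
    (fun x : Fin k → ℕ => ∑ i : Fin k, ((i : ℕ) + 1) * x i)).tsum_eq
  rw [← h]
  refine tsum_congr fun n => ?_
  rw [show ((fun x : Fin k → ℕ => ∑ i : Fin k, ((i : ℕ) + 1) * x i) ⁻¹' {n}) = ↑(Omega k n) from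
    fiber_eq k n]
  exact (Finset.tsum_subtype (Omega k n) F).symm

private lemma gauss1 (k : ℕ) : ∑ j : Fin k, ((j : ℕ) + 1 : ℝ) = k * (k + 1) / 2 := by
  induction k with
  | zero => simp
  | succ n ih =>
    rw [Fin.sum_univ_castSucc]
    simp only [Fin.coe_castSucc, Fin.val_last]
    rw [ih]
    push_cast
    ring

private lemma gauss2 (k : ℕ) :
    ∑ j : Fin k, (((j : ℕ) + 1 : ℝ) * ((j : ℕ) + 1 : ℝ)) = k * (k + 1) * (2 * k + 1) / 6 := by
  induction k with
  | zero => simp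
  | succ n ih =>
    rw [Fin.sum_univ_castSucc]
    simp only [Fin.coe_castSucc, Fin.val_last]
    rw [ih]
    push_cast
    ring

private lemma ck_term (y : ℝ) {k : ℕ} (x : Fin k → ℕ) :
    y ^ zeta x / (pifact x : ℝ) = ∏ i : Fin k, (y ^ (x i) / ((x i).factorial : ℝ)) := by
  rw [zeta, pifact, ← Finset.prod_pow_eq_pow_sum, Nat.cast_prod, Finset.prod_div_distrib]

/-! ### The weight functions -/

private noncomputable def g1 (y : ℝ) (k : ℕ) (j : Fin k) : Fin k → ℕ → ℝ :=
  fun i m => (if i = j then (m : ℝ) else 1) * (y ^ m / m.factorial)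

private noncomputable def g2 (y : ℝ) (k : ℕ) (j l : Fin k) : Fin k → ℕ → ℝ :=
  fun i m =>
    (if i = j then (m : ℝ) else 1) * (if i = l then (m : ℝ) else 1) * (y ^ m / m.factorial)

private lemma g1_nonneg {y : ℝ} (hy : 0 ≤ y) (k : ℕ) (j i : Fin k) (m : ℕ) :
    0 ≤ g1 y k j i m := by
  unfold g1
  have : (0:ℝ) ≤ y ^ m / m.factorial := by positivity
  by_cases h : i = j <;> simp [h] <;> positivity

private lemma g2_nonneg {y : ℝ} (hy : 0 ≤ y) (k : ℕ) (j l i : Fin k) (m : ℕ) :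
    0 ≤ g2 y k j l i m := by
  unfold g2
  by_cases h : i = j <;> by_cases h' : i = l <;> simp [h, h'] <;> positivity

private lemma g1_summable (y : ℝ) (k : ℕ) (j i : Fin k) : Summable (g1 y k j i) := by
  unfold g1
  by_cases h : i = j <;> simp only [h, if_true, if_false, one_mul]
  · exact summable1 y
  · exact Real.summable_pow_div_factorial y

private lemma g2_summable (y : ℝ) (k : ℕ) (j l i : Fin k) : Summable (g2 y k j l i) := by
  unfold g2
  by_cases h : i = j <;> by_cases h' : i = l
  · simp only [if_pos h, if_pos h']
    exact summable2 y
  · simp only [if_pos h, if_neg h', mul_one]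
    exact summable1 y
  · simp only [if_neg h, if_pos h', one_mul]
    exact summable1 y
  · simp only [if_neg h, if_neg h', one_mul]
    exact Real.summable_pow_div_factorial y

private lemma prod_g1_apply (y : ℝ) (k : ℕ) (j : Fin k) (x : Fin k → ℕ) :
    ∏ i : Fin k, g1 y k j i (x i)
      = (x j : ℝ) * ∏ i : Fin k, (y ^ (x i) / ((x i).factorial : ℝ)) := by
  unfold g1
  rw [Finset.prod_mul_distrib, Finset.prod_ite_eq']
  simp

private lemma prod_g2_apply (y : ℝ) (k : ℕ) (j l : Fin k) (x : Fin k → ℕ) :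
    ∏ i : Fin k, g2 y k j l i (x i)
      = (x j : ℝ) * (x l : ℝ) * ∏ i : Fin k, (y ^ (x i) / ((x i).factorial : ℝ)) := by
  unfold g2
  rw [Finset.prod_mul_distrib, Finset.prod_mul_distrib, Finset.prod_ite_eq',
    Finset.prod_ite_eq']
  simp

private lemma prod_tsum_g1 (y : ℝ) (k : ℕ) (j : Fin k) :
    ∏ i : Fin k, ∑' m : ℕ, g1 y k j i m = y * Real.exp y ^ k := by
  have h : ∀ i : Fin k, ∑' m : ℕ, g1 y k j i m
      = (if i = j then y else 1) * Real.exp y := by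
    intro i
    unfold g1
    by_cases hij : i = j <;> simp only [hij, if_true, if_false, one_mul]
    · exact tsum1 y
    · exact tsum_h y
  rw [Finset.prod_congr rfl fun i _ => h i, Finset.prod_mul_distrib, Finset.prod_ite_eq',
    Finset.prod_const]
  simp [Finset.card_univ]

private lemma prod_tsum_g2 (y : ℝ) (k : ℕ) (j l : Fin k) :
    ∏ i : Fin k, ∑' m : ℕ, g2 y k j l i m
      = (if j = l then y * y + y else y * y) * Real.exp y ^ k := by
  by_cases hjl : j = l
  · subst hjl
    have h : ∀ i : Fin k, ∑' m : ℕ, g2 y k j j i m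
        = (if i = j then y * y + y else 1) * Real.exp y := by
      intro i
      unfold g2
      by_cases hij : i = j
      · simp only [if_pos hij]
        exact tsum2 y
      · simp only [if_neg hij, one_mul]
        exact tsum_h y
    rw [Finset.prod_congr rfl fun i _ => h i, Finset.prod_mul_distrib, Finset.prod_ite_eq',
      Finset.prod_const]
    simp [Finset.card_univ]
  · have h : ∀ i : Fin k, ∑' m : ℕ, g2 y k j l i m
        = ((if i = j then y else 1) * (if i = l then y else 1)) * Real.exp y := by
      intro i
      unfold g2
      by_cases hij : i = j <;> by_cases hil : i = l
      · exact absurd (hij ▸ hil) hjl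
      · simp only [if_pos hij, if_neg hil, mul_one]
        exact tsum1 y
      · simp only [if_neg hij, if_pos hil, one_mul]
        exact tsum1 y
      · simp only [if_neg hij, if_neg hil, one_mul]
        exact tsum_h y
    rw [Finset.prod_congr rfl fun i _ => h i, Finset.prod_mul_distrib,
      Finset.prod_mul_distrib, Finset.prod_ite_eq', Finset.prod_ite_eq', Finset.prod_const]
    simp [Finset.card_univ, hjl]

private lemma double_sum (k : ℕ) (A B Ek : ℝ) :
    ∑ j : Fin k, ∑ l : Fin k,
        ((((j : ℕ) : ℝ) + 1) * (((l : ℕ) : ℝ) + 1)) * ((if j = l then A + B else A) * Ek)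
      = (A * (((k : ℝ) * (k + 1) / 2) * ((k : ℝ) * (k + 1) / 2))
          + B * ((k : ℝ) * (k + 1) * (2 * k + 1) / 6)) * Ek := by
  have h1 : ∀ j l : Fin k,
      ((((j : ℕ) : ℝ) + 1) * (((l : ℕ) : ℝ) + 1)) * ((if j = l then A + B else A) * Ek)
        = (A * Ek) * ((((j : ℕ) : ℝ) + 1) * (((l : ℕ) : ℝ) + 1))
          + (if j = l then (B * Ek) * ((((j : ℕ) : ℝ) + 1) * (((l : ℕ) : ℝ) + 1)) else 0) := by
    intro j l
    by_cases h : j = l <;> simp [h] <;> ring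
  rw [Finset.sum_congr rfl fun j _ => Finset.sum_congr rfl fun l _ => h1 j l]
  simp only [Finset.sum_add_distrib, Finset.sum_ite_eq, Finset.mem_univ, if_true]
  simp only [← Finset.mul_sum, ← Finset.sum_mul]
  rw [gauss1, gauss2]
  ring

/-! ### Main theorem -/

/-- Mean and variance of the homogeneous Poisson field of order `k` on a set of measure
`a`: the pmf `n ↦ e^{−kλa} c_k(n, λa)` has mean `(k(k+1)/2) λ a` and variance
`(k(k+1)(2k+1)/6) λ a`. -/
theorem mean_variance_homogeneous_poisson_field_of_order_k
    (k : ℕ) (hk : 1 ≤ k) (lam a : ℝ) (hlam : 0 < lam) (ha : 0 ≤ a) :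
    (∑' n : ℕ, (n : ℝ) * Real.exp (-(k * lam * a)) * ck k n (lam * a) =
        (k * (k + 1) / 2) * lam * a) ∧
    (∑' n : ℕ, (n : ℝ) ^ 2 * Real.exp (-(k * lam * a)) * ck k n (lam * a) -
        ((k * (k + 1) / 2) * lam * a) ^ 2 =
      (k * (k + 1) * (2 * k + 1) / 6) * lam * a) := by
  set y : ℝ := lam * a with hy_def
  have hy : 0 ≤ y := mul_nonneg hlam.le ha
  have hpit1 : ∀ j : Fin k, Summable (fun x : Fin k → ℕ => ∏ i, g1 y k j i (x i)) ∧
      ∑' x : Fin k → ℕ, ∏ i, g1 y k j i (x i) = ∏ i, ∑' m, g1 y k j i m :=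
    fun j => pi_tsum (g1 y k j) (fun i m => g1_nonneg hy k j i m) (fun i => g1_summable y k j i)
  have hpit2 : ∀ j l : Fin k, Summable (fun x : Fin k → ℕ => ∏ i, g2 y k j l i (x i)) ∧
      ∑' x : Fin k → ℕ, ∏ i, g2 y k j l i (x i) = ∏ i, ∑' m, g2 y k j l i m :=
    fun j l => pi_tsum (g2 y k j l) (fun i m => g2_nonneg hy k j l i m)
      (fun i => g2_summable y k j l i)
  set F1 : (Fin k → ℕ) → ℝ := fun x =>
    ((∑ i : Fin k, ((i : ℕ) + 1) * x i : ℕ) : ℝ)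
      * ∏ i : Fin k, (y ^ (x i) / ((x i).factorial : ℝ)) with hF1_def
  have hF1eq : ∀ x, F1 x = ∑ j : Fin k, (((j : ℕ) : ℝ) + 1) * ∏ i, g1 y k j i (x i) := by
    intro x
    rw [hF1_def]
    push_cast
    rw [Finset.sum_mul]
    refine Finset.sum_congr rfl fun j _ => ?_
    rw [prod_g1_apply]
    ring
  have hF1sum : Summable F1 := by
    rw [show F1 = _ from funext hF1eq]
    exact summable_sum fun j _ => ((hpit1 j).1.mul_left _)
  have hF1tsum : ∑' x, F1 x = ((k : ℝ) * (k + 1) / 2) * (y * Real.exp y ^ k) := by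
    rw [tsum_congr hF1eq, Summable.tsum_finsetSum fun j _ => ((hpit1 j).1.mul_left _)]
    have h : ∀ j : Fin k, ∑' x : Fin k → ℕ, (((j : ℕ) : ℝ) + 1) * ∏ i, g1 y k j i (x i)
        = (((j : ℕ) : ℝ) + 1) * (y * Real.exp y ^ k) := by
      intro j
      rw [tsum_mul_left, (hpit1 j).2, prod_tsum_g1]
    rw [Finset.sum_congr rfl fun j _ => h j, ← Finset.sum_mul, gauss1]
  set F2 : (Fin k → ℕ) → ℝ := fun x =>
    ((∑ i : Fin k, ((i : ℕ) + 1) * x i : ℕ) : ℝ) ^ 2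
      * ∏ i : Fin k, (y ^ (x i) / ((x i).factorial : ℝ)) with hF2_def
  have hF2eq : ∀ x, F2 x = ∑ j : Fin k, ∑ l : Fin k,
      ((((j : ℕ) : ℝ) + 1) * (((l : ℕ) : ℝ) + 1)) * ∏ i, g2 y k j l i (x i) := by
    intro x
    rw [hF2_def]
    push_cast
    rw [pow_two, Finset.sum_mul_sum, Finset.sum_mul]
    refine Finset.sum_congr rfl fun j _ => ?_
    rw [Finset.sum_mul]
    refine Finset.sum_congr rfl fun l _ => ?_
    rw [prod_g2_apply]
    ring
  have hF2summands : ∀ j l : Fin k, Summable (fun x : Fin k → ℕ =>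
      ((((j : ℕ) : ℝ) + 1) * (((l : ℕ) : ℝ) + 1)) * ∏ i, g2 y k j l i (x i)) :=
    fun j l => (hpit2 j l).1.mul_left _
  have hF2sum : Summable F2 := by
    rw [show F2 = _ from funext hF2eq]
    exact summable_sum fun j _ => summable_sum fun l _ => hF2summands j l
  have hF2tsum : ∑' x, F2 x
      = ((y * y) * (((k : ℝ) * (k + 1) / 2) * ((k : ℝ) * (k + 1) / 2))
          + y * ((k : ℝ) * (k + 1) * (2 * k + 1) / 6)) * Real.exp y ^ k := by
    rw [tsum_congr hF2eq, Summable.tsum_finsetSum fun j _ => summable_sum fun l _ => hF2summands j l]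
    rw [Finset.sum_congr rfl fun j _ => Summable.tsum_finsetSum fun l _ => hF2summands j l]
    rw [Finset.sum_congr rfl fun j _ => Finset.sum_congr rfl fun l _ => by
      rw [tsum_mul_left, (hpit2 j l).2, prod_tsum_g2]]
    exact double_sum k (y * y) y (Real.exp y ^ k)
  have hexp : Real.exp (-((k : ℝ) * lam * a)) * Real.exp y ^ k = 1 := by
    rw [← Real.exp_nat_mul, ← Real.exp_add,
      show -((k : ℝ) * lam * a) + (k : ℝ) * y = 0 by rw [hy_def]; ring, Real.exp_zero]
  have hmean0 : ∀ n : ℕ, (n : ℝ) * Real.exp (-((k : ℝ) * lam * a)) * ck k n y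
      = Real.exp (-((k : ℝ) * lam * a)) * ∑ x ∈ Omega k n, F1 x := by
    intro n
    simp only [ck, Finset.mul_sum]
    refine Finset.sum_congr rfl fun x hx => ?_
    have hq : (∑ i : Fin k, ((i : ℕ) + 1) * x i) = n := (Finset.mem_filter.mp hx).2
    rw [ck_term y x]
    simp only [hF1_def]
    rw [hq]
    ring
  have hvar0 : ∀ n : ℕ, (n : ℝ) ^ 2 * Real.exp (-((k : ℝ) * lam * a)) * ck k n y
      = Real.exp (-((k : ℝ) * lam * a)) * ∑ x ∈ Omega k n, F2 x := by
    intro n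
    simp only [ck, Finset.mul_sum]
    refine Finset.sum_congr rfl fun x hx => ?_
    have hq : (∑ i : Fin k, ((i : ℕ) + 1) * x i) = n := (Finset.mem_filter.mp hx).2
    rw [ck_term y x]
    simp only [hF2_def]
    rw [hq]
    ring
  constructor
  · calc ∑' n : ℕ, (n : ℝ) * Real.exp (-((k : ℝ) * lam * a)) * ck k n y
        = ∑' n : ℕ, Real.exp (-((k : ℝ) * lam * a)) * ∑ x ∈ Omega k n, F1 x :=
          tsum_congr hmean0
      _ = Real.exp (-((k : ℝ) * lam * a)) * ∑' n : ℕ, ∑ x ∈ Omega k n, F1 x := tsum_mul_left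
      _ = Real.exp (-((k : ℝ) * lam * a)) * ∑' x, F1 x := by rw [group_tsum F1 hF1sum]
      _ = ((k : ℝ) * (k + 1) / 2) * y
            * (Real.exp (-((k : ℝ) * lam * a)) * Real.exp y ^ k) := by rw [hF1tsum]; ring
      _ = ((k : ℝ) * (k + 1) / 2) * lam * a := by rw [hexp, mul_one, hy_def]; ring
  · have hv : ∑' n : ℕ, (n : ℝ) ^ 2 * Real.exp (-((k : ℝ) * lam * a)) * ck k n y
        = ((y * y) * (((k : ℝ) * (k + 1) / 2) * ((k : ℝ) * (k + 1) / 2))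
            + y * ((k : ℝ) * (k + 1) * (2 * k + 1) / 6))
          * (Real.exp (-((k : ℝ) * lam * a)) * Real.exp y ^ k) := by
      calc ∑' n : ℕ, (n : ℝ) ^ 2 * Real.exp (-((k : ℝ) * lam * a)) * ck k n y
          = ∑' n : ℕ, Real.exp (-((k : ℝ) * lam * a)) * ∑ x ∈ Omega k n, F2 x :=
            tsum_congr hvar0
        _ = Real.exp (-((k : ℝ) * lam * a)) * ∑' n : ℕ, ∑ x ∈ Omega k n, F2 x := tsum_mul_left
        _ = Real.exp (-((k : ℝ) * lam * a)) * ∑' x, F2 x := by rw [group_tsum F2 hF2sum]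
        _ = _ := by rw [hF2tsum]; ring
    rw [hv, hexp, mul_one, hy_def]
    ring
end

section
/- Let k ≥ 1 be an integer, λ > 0, β ∈ (0,1], and t ≥ 0. Then the derivative at u = 1 of the probability generating function of the time-fractional Poisson process of order k satisfies (d/du) M_β(−kλt^β(1 − (1/k)∑_{j=1}^k u^j)) |_{u=1} = (k(k+1)/2) · λ t^β / Γ(1+β); that is, the mean of the time-fractional Poisson process of order k is E[N_β^k(t)] = (k(k+1)/2) λ t^β / Γ(1+β). -/
open scoped BigOperators

/-- The Mittag-Leffler function `M_β(z) = ∑_{m=0}^∞ z^m / Γ(βm + 1)`. -/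
noncomputable def mittagLeffler (β z : ℝ) : ℝ :=
  ∑' m : ℕ, z ^ m / Real.Gamma (β * m + 1)

/-!
The generating function is `M_β ∘ z` with `z u = -kλt^β (1 - φ u)`, where `φ` is the generating
function of a jump uniform on `{1, …, k}`; thus `z 1 = 0` and `z' 1 = kλt^β · (k + 1) / 2`.
Since `Γ x ≥ 2 ^ (x - 3)` for `x ≥ 2`, the coefficients `1 / Γ(βm + 1)` of `M_β` decay
geometrically, so `M_β` is a convergent power series and `M_β' 0 = 1 / Γ(β + 1)`. The chain rule
concludes.
-/

open Real Filter Finset FormalMultilinearSeries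

lemma two_pow_le_Gamma_natCast_add_two (n : ℕ) : (2 : ℝ) ^ n ≤ Gamma (n + 2) := by
  have h := Nat.factorial_mul_pow_le_factorial (m := 1) (n := n)
  rw [Nat.factorial_one, one_mul, one_add_one_eq_two, Nat.add_comm 1 n] at h
  rw [show (n : ℝ) + 2 = (n + 1 : ℕ) + 1 by push_cast; ring, Gamma_nat_eq_factorial]
  exact_mod_cast h

lemma two_rpow_sub_three_le_Gamma {x : ℝ} (hx : 2 ≤ x) : (2 : ℝ) ^ (x - 3) ≤ Gamma x := by
  obtain ⟨n, hn⟩ : ∃ n : ℕ, ⌊x⌋₊ = n + 2 :=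
    ⟨⌊x⌋₊ - 2, by have := Nat.le_floor (n := 2) (by exact_mod_cast hx); omega⟩
  have hnx : (n : ℝ) + 2 ≤ x := by exact_mod_cast hn ▸ Nat.floor_le (by linarith)
  have hxn : x - 3 ≤ n := by
    have := Nat.lt_floor_add_one x
    rw [hn] at this; push_cast at this; linarith
  calc (2 : ℝ) ^ (x - 3) ≤ 2 ^ (n : ℝ) := rpow_le_rpow_of_exponent_le one_le_two hxn
    _ = 2 ^ n := rpow_natCast 2 n
    _ ≤ Gamma (n + 2) := two_pow_le_Gamma_natCast_add_two n
    _ ≤ Gamma x := Gamma_strictMonoOn_Ici.monotoneOn (by simp)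
        (le_trans (by norm_num) hx) hnx

lemma summable_inv_Gamma_mul_add {β : ℝ} (hβ : 0 < β) (c : ℝ) :
    Summable fun m : ℕ => (Gamma (β * m + c))⁻¹ := by
  have hq : (2 : ℝ) ^ (-β) < 1 := rpow_lt_one_of_one_lt_of_neg one_lt_two (neg_neg_of_pos hβ)
  refine .of_norm_bounded_eventually_nat
    ((summable_geometric_of_lt_one (by positivity) hq).mul_left ((2 : ℝ) ^ (3 - c))) ?_
  have hlarge : ∀ᶠ m : ℕ in atTop, 2 ≤ β * m + c :=
    ((tendsto_natCast_atTop_atTop.const_mul_atTop hβ).atTop_add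
      tendsto_const_nhds).eventually_ge_atTop 2
  filter_upwards [hlarge] with m hm
  have hΓ := two_rpow_sub_three_le_Gamma hm
  rw [norm_inv, norm_of_nonneg (by linarith [rpow_pos_of_pos two_pos (β * m + c - 3)]),
    ← rpow_natCast, ← rpow_mul two_pos.le, ← rpow_add two_pos]
  calc (Gamma (β * m + c))⁻¹ ≤ (2 ^ (β * m + c - 3))⁻¹ := inv_anti₀ (by positivity) hΓ
    _ = 2 ^ (3 - c + -β * m) := by rw [← rpow_neg two_pos.le]; ring_nf

noncomputable def mittagLefflerSeries (β : ℝ) : FormalMultilinearSeries ℝ ℝ ℝ :=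
  ofScalars ℝ fun m => (Gamma (β * m + 1))⁻¹

lemma mittagLeffler_eq_sum (β : ℝ) : mittagLeffler β = (mittagLefflerSeries β).sum := by
  funext z
  rw [mittagLefflerSeries, ← ofScalarsSum, ofScalarsSum_eq_tsum]
  simp only [mittagLeffler, smul_eq_mul, div_eq_inv_mul]

lemma one_le_radius_mittagLefflerSeries {β : ℝ} (hβ : 0 < β) :
    1 ≤ (mittagLefflerSeries β).radius := by
  have := le_radius_of_summable (mittagLefflerSeries β) (r := 1) ?_
  · simpa using this
  refine (summable_inv_Gamma_mul_add hβ 1).congr fun m => ?_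
  rw [mittagLefflerSeries, ofScalars_norm, norm_inv, norm_of_nonneg
    (Gamma_pos_of_pos (by positivity)).le, NNReal.coe_one, one_pow, mul_one]

lemma hasDerivAt_mittagLeffler_zero {β : ℝ} (hβ : 0 < β) :
    HasDerivAt (mittagLeffler β) (Gamma (β + 1))⁻¹ 0 := by
  have h := ((mittagLefflerSeries β).hasFPowerSeriesOnBall
    (zero_lt_one.trans_le (one_le_radius_mittagLefflerSeries hβ))).hasFPowerSeriesAt.hasDerivAt
  rw [mittagLeffler_eq_sum]
  simpa [mittagLefflerSeries, ofScalars_apply_eq] using h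

lemma HasDerivAt.mittagLeffler_of_eq_zero {β f' x : ℝ} {f : ℝ → ℝ} (hβ : 0 < β)
    (hf : HasDerivAt f f' x) (hfx : f x = 0) :
    HasDerivAt (fun u => mittagLeffler β (f u)) (f' / Gamma (β + 1)) x := by
  rw [div_eq_inv_mul]
  exact (hfx ▸ hasDerivAt_mittagLeffler_zero hβ).comp x hf

/-- `E[u ^ X]` for `X` uniform on `{1, …, k}`. -/
noncomputable def uniformPGF (k : ℕ) (u : ℝ) : ℝ :=
  (1 / k) * ∑ j ∈ range k, u ^ (j + 1)

lemma uniformPGF_one {k : ℕ} (hk : k ≠ 0) : uniformPGF k 1 = 1 := by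
  simp [uniformPGF, hk]

lemma sum_range_natCast_add_one (k : ℕ) : ∑ j ∈ range k, ((j : ℝ) + 1) = k * (k + 1) / 2 := by
  induction k with
  | zero => simp
  | succ n ih => rw [sum_range_succ, ih]; push_cast; ring

lemma hasDerivAt_uniformPGF_one {k : ℕ} (hk : k ≠ 0) :
    HasDerivAt (uniformPGF k) ((k + 1) / 2) 1 := by
  have hsum : HasDerivAt (fun u : ℝ => ∑ j ∈ range k, u ^ (j + 1)) (k * (k + 1) / 2) 1 := by
    rw [← sum_range_natCast_add_one]
    exact .fun_sum fun j _ => by simpa using hasDerivAt_pow (j + 1) (1 : ℝ)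
  exact (hsum.const_mul (1 / (k : ℝ))).congr_deriv (by field_simp)

theorem mean_time_fractional_poisson_of_order_k_general
    (k : ℕ) (hk : 1 ≤ k) (lam β t : ℝ) (hβ : β ∈ Set.Ioc (0 : ℝ) 1) :
    deriv (fun u : ℝ =>
        mittagLeffler β
          (-(k * lam * t ^ β * (1 - (1 / k) * ∑ j ∈ Finset.range k, u ^ (j + 1))))) 1 =
      (k * (k + 1) / 2) * lam * t ^ β / Real.Gamma (1 + β) := by
  have hk0 : k ≠ 0 := Nat.one_le_iff_ne_zero.mp hk
  have hz : HasDerivAt (fun u => -(k * lam * t ^ β * (1 - uniformPGF k u)))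
      (k * lam * t ^ β * ((k + 1) / 2)) 1 :=
    (((hasDerivAt_uniformPGF_one hk0).const_sub 1).const_mul (k * lam * t ^ β)).neg
      |>.congr_deriv (by ring)
  have hz1 : -(k * lam * t ^ β * (1 - uniformPGF k 1)) = 0 := by simp [uniformPGF_one hk0]
  refine (hz.mittagLeffler_of_eq_zero hβ.1 hz1).deriv.trans ?_
  rw [add_comm β]
  ring

/-- The mean of the time-fractional Poisson process of order `k`: the derivative at
`u = 1` of its probability generating function
`u ↦ M_β(−kλt^β(1 − (1/k)∑_{j=1}^k u^j))` equals `(k(k+1)/2) λ t^β / Γ(1+β)`. -/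
theorem mean_time_fractional_poisson_of_order_k
    (k : ℕ) (hk : 1 ≤ k) (lam β t : ℝ) (hlam : 0 < lam) (hβ : β ∈ Set.Ioc (0 : ℝ) 1)
    (ht : 0 ≤ t) :
    deriv (fun u : ℝ =>
        mittagLeffler β
          (-(k * lam * t ^ β * (1 - (1 / k) * ∑ j ∈ Finset.range k, u ^ (j + 1))))) 1 =
      (k * (k + 1) / 2) * lam * t ^ β / Real.Gamma (1 + β) :=
  mean_time_fractional_poisson_of_order_k_general k hk lam β t hβ
end
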